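/- arXiv:1012.1531 — 4 statements merged into one kernel-verified Lean document; each statement's English description precedes it below -/
import Mathlib

section
/- A finitely generated group G with finite generating set A is automatic if and only if there exist a rational (regular) language L over the alphabet à = A ∪ A⁻¹ whose image under the evaluation map π : Ã* → G is all of G, and a constant k, such that for any two words u, v ∈ L with d(π(u), π(v)) ≤ 1 in the word metric, the paths u and v k-fellow-travel. -/
/-!
Automatic groups: geometric characterization (fellow-traveller property).
-/

/-- Evaluation of a word over the alphabet `S` in the group `G`, via `e : S → G`. -/
def wordEval {G : Type*} [Group G] {S : Type*} (e : S → G) (w : List S) : G :=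
  (w.map e).prod

/-- The word metric on `G` with respect to the (symmetric) generating map `e : S → G`. -/
noncomputable def wordDist {G : Type*} [Group G] {S : Type*} (e : S → G) (g h : G) : ℕ :=
  sInf {n : ℕ | ∃ w : List S, w.length = n ∧ wordEval e w = g⁻¹ * h}

/-- The point reached after `j` steps along the path traced by the word `u`. -/
def pathAt {G : Type*} [Group G] {S : Type*} (e : S → G) (u : List S) (j : ℕ) : G :=
  wordEval e (u.take j)

/-- Two words `k`-fellow-travel if the corresponding paths stay at word-metric
distance at most `k` at each time. -/
def FellowTravel {G : Type*} [Group G] {S : Type*} (e : S → G) (k : ℕ) (u v : List S) : Prop :=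
  ∀ j : ℕ, wordDist e (pathAt e u j) (pathAt e v j) ≤ k

/-- Evaluation of a padded letter (`none` is the padding symbol, evaluating to `1`). -/
def padEval {G : Type*} [Group G] {S : Type*} (e : S → G) : Option S → G
  | none => 1
  | some a => e a

/-- The padded pair-word associated to two words `u`, `v`: the shorter one is
padded at its end with the padding symbol `none`. -/
def padWord {S : Type*} (u v : List S) : List (Option S × Option S) :=
  List.zip (u.map some ++ List.replicate (max u.length v.length - u.length) none)
           (v.map some ++ List.replicate (max u.length v.length - v.length) none)

/-- An automatic structure on the group `G` with (symmetric) generating alphabet `S`,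
`e : S → G` being the evaluation of letters: a finite-state word acceptor `L` whose
language surjects onto `G`, and, for each padded letter `s`, a finite-state
multiplication automaton `M s` recognizing exactly the padded pairs `(u,v)` of accepted
words with `π u = π v · π s`. -/
structure AutomaticStructure (G : Type*) [Group G] (S : Type*) (e : S → G) where
  σL : Type
  instFinL : Fintype σL
  L : DFA S σL
  σM : Option S → Type
  instFinM : ∀ s, Fintype (σM s)
  M : ∀ s : Option S, DFA (Option S × Option S) (σM s)
  surjective : ∀ g : G, ∃ u ∈ L.accepts, wordEval e u = g
  mult : ∀ (s : Option S) (u v : List S), u ∈ L.accepts → v ∈ L.accepts →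
    (padWord u v ∈ (M s).accepts ↔ wordEval e u = wordEval e v * padEval e s)

/-!
Given an automatic structure, the padded pairs of accepted words `(u, v)` with `π u = π v · π s`
form a regular language, so by pumping every prefix of such a pair can be completed to another
such pair `(U, V)` with fewer than `N` further letters. Since `U`, `V` extend the prefixes of `u`,
`v` read so far and `π U = π V · π s`, the two paths are at distance at most `2N` at every time.

Conversely, if accepted words at distance at most `1` are `k`-fellow travellers, the word
differences `(π u(j))⁻¹ π v(j)` along the padded pair stay in the finite ball of radius `k`,
so a finite automaton can track them and accept exactly when the last one equals `(π s)⁻¹`.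
-/

section WordMetric

variable {G : Type*} [Group G] {S : Type*} (e : S → G)

@[simp] theorem wordEval_nil : wordEval e [] = 1 := rfl

@[simp] theorem wordEval_append (x y : List S) :
    wordEval e (x ++ y) = wordEval e x * wordEval e y := by
  simp [wordEval]

@[simp] theorem wordEval_cons (a : S) (x : List S) :
    wordEval e (a :: x) = e a * wordEval e x := by
  simp [wordEval]

@[simp] theorem wordEval_toList (s : Option S) : wordEval e s.toList = padEval e s := by
  cases s <;> simp [wordEval, padEval]

theorem wordEval_padEval (l : List (Option S)) :
    wordEval (padEval e) l = wordEval e l.reduceOption := by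
  induction l with
  | nil => rfl
  | cons c l ih => cases c <;> simp [ih, padEval]

variable {e}

theorem exists_wordEval_eq_inv (hsym : ∀ a, ∃ b, e b = (e a)⁻¹) (w : List S) :
    ∃ w' : List S, w'.length = w.length ∧ wordEval e w' = (wordEval e w)⁻¹ := by
  induction w with
  | nil => exact ⟨[], rfl, by simp⟩
  | cons a w ih =>
    obtain ⟨b, hb⟩ := hsym a
    obtain ⟨w', hlen, hw'⟩ := ih
    exact ⟨w' ++ [b], by simp [hlen], by simp [hw', hb]⟩

theorem exists_wordEval_eq (hsym : ∀ a, ∃ b, e b = (e a)⁻¹)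
    (hgen : Subgroup.closure (Set.range e) = ⊤) (g : G) : ∃ w, wordEval e w = g := by
  have hg : g ∈ Subgroup.closure (Set.range e) := hgen ▸ Subgroup.mem_top g
  induction hg using Subgroup.closure_induction with
  | mem _ hx => obtain ⟨a, rfl⟩ := hx; exact ⟨[a], by simp⟩
  | one => exact ⟨[], rfl⟩
  | mul _ _ _ _ hx hy =>
    obtain ⟨x, rfl⟩ := hx; obtain ⟨y, rfl⟩ := hy
    exact ⟨x ++ y, wordEval_append e x y⟩
  | inv _ _ hx =>
    obtain ⟨x, rfl⟩ := hx
    obtain ⟨x', -, hx'⟩ := exists_wordEval_eq_inv hsym x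
    exact ⟨x', hx'⟩

theorem wordDist_le_length {g h : G} {w : List S} (hw : wordEval e w = g⁻¹ * h) :
    wordDist e g h ≤ w.length :=
  Nat.sInf_le ⟨w, rfl, hw⟩

theorem exists_wordEval_eq_of_wordDist_le (hsym : ∀ a, ∃ b, e b = (e a)⁻¹)
    (hgen : Subgroup.closure (Set.range e) = ⊤) {g h : G} {n : ℕ} (hd : wordDist e g h ≤ n) :
    ∃ w : List S, w.length ≤ n ∧ wordEval e w = g⁻¹ * h := by
  obtain ⟨w₀, hw₀⟩ := exists_wordEval_eq hsym hgen (g⁻¹ * h)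
  obtain ⟨w, hlen, hw⟩ := Nat.sInf_mem (⟨w₀.length, w₀, rfl, hw₀⟩ :
    {n | ∃ w : List S, w.length = n ∧ wordEval e w = g⁻¹ * h}.Nonempty)
  exact ⟨w, hlen ▸ hd, hw⟩

theorem wordDist_le_of_mul_wordEval_eq (hsym : ∀ a, ∃ b, e b = (e a)⁻¹) {g h : G}
    {w₁ w₂ : List S} (hw : g * wordEval e w₁ = h * wordEval e w₂) :
    wordDist e g h ≤ w₁.length + w₂.length := by
  obtain ⟨w₂', hlen, hw₂'⟩ := exists_wordEval_eq_inv hsym w₂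
  refine (wordDist_le_length (w := w₁ ++ w₂') ?_).trans (by simp [hlen])
  rw [wordEval_append, hw₂', eq_inv_mul_iff_mul_eq, ← mul_assoc, hw, mul_inv_cancel_right]

theorem exists_eq_mul_padEval_of_wordDist_le_one (hsym : ∀ a, ∃ b, e b = (e a)⁻¹)
    (hgen : Subgroup.closure (Set.range e) = ⊤) {g h : G} (hd : wordDist e g h ≤ 1) :
    ∃ s : Option S, g = h * padEval e s := by
  obtain ⟨w, hlen, hw⟩ := exists_wordEval_eq_of_wordDist_le hsym hgen hd
  obtain ⟨w', hlen', hw'⟩ := exists_wordEval_eq_inv hsym w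
  refine ⟨w'.head?, ?_⟩
  have hw'_eq : w' = w'.head?.toList := by
    match w', hlen' with
    | [], _ => rfl
    | [_], _ => rfl
    | _ :: _ :: _, h => exact absurd hlen (by simp only [List.length_cons] at h; omega)
  rw [← wordEval_toList, ← hw'_eq, hw', hw]
  group

end WordMetric

theorem List.reverseRecOn₂ {α : Type*} {P : List α → List α → Prop} (u v : List α)
    (nil : P [] [])
    (both : ∀ u v a b, u.length = v.length → P u v → P (u ++ [a]) (v ++ [b]))
    (left : ∀ u v a, v.length ≤ u.length → P u v → P (u ++ [a]) v)
    (right : ∀ u v b, u.length ≤ v.length → P u v → P u (v ++ [b])) : P u v := by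
  induction hn : u.length + v.length using Nat.strong_induction_on generalizing u v with
  | _ n ih =>
    rcases u.eq_nil_or_concat' with rfl | ⟨u, a, rfl⟩ <;>
      rcases v.eq_nil_or_concat' with rfl | ⟨v, b, rfl⟩ <;>
      simp only [List.length_nil, List.length_append, List.length_singleton] at hn
    · exact nil
    · exact right [] v b (Nat.zero_le _) (ih v.length (by omega) [] v (Nat.zero_add _))
    · exact left u [] a (Nat.zero_le _) (ih u.length (by omega) u [] (Nat.add_zero _))
    · rcases lt_trichotomy u.length v.length with huv | huv | huv
      · exact right _ v b (by simpa using huv)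
          (ih (u.length + 1 + v.length) (by omega) (u ++ [a]) v (by simp))
      · exact both u v a b huv (ih (u.length + v.length) (by omega) u v rfl)
      · exact left u _ a (by simpa using huv)
          (ih (u.length + (v.length + 1)) (by omega) u (v ++ [b]) (by simp))

section Padding

variable {S : Type*}

def padRight (n : ℕ) (u : List S) : List (Option S) :=
  u.map some ++ List.replicate (n - u.length) none

theorem padWord_eq_zip_padRight (u v : List S) :
    padWord u v = (padRight (max u.length v.length) u).zip (padRight (max u.length v.length) v) :=
  rfl

theorem length_padRight {n : ℕ} {u : List S} (h : u.length ≤ n) : (padRight n u).length = n := by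
  simp [padRight, Nat.add_sub_cancel' h]

theorem padRight_succ {n : ℕ} {u : List S} (h : u.length ≤ n) :
    padRight (n + 1) u = padRight n u ++ [none] := by
  simp [padRight, Nat.sub_add_comm h, List.replicate_succ']

theorem padRight_append_singleton {n : ℕ} {u : List S} (h : u.length = n) (a : S) :
    padRight (n + 1) (u ++ [a]) = padRight n u ++ [some a] := by
  simp [padRight, h]

@[simp] theorem reduceOption_map_some (u : List S) : (u.map some).reduceOption = u := by
  simp [List.reduceOption, List.filterMap_map]

theorem reduceOption_take_padRight (n j : ℕ) (u : List S) :
    ((padRight n u).take j).reduceOption = u.take j := by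
  simp [padRight, List.take_append, List.reduceOption_append, List.take_replicate, ← List.map_take]

theorem length_padWord (u v : List S) : (padWord u v).length = max u.length v.length := by
  simp [padWord_eq_zip_padRight, length_padRight]

theorem padWord_append_singleton_both {u v : List S} (h : u.length = v.length) (a b : S) :
    padWord (u ++ [a]) (v ++ [b]) = padWord u v ++ [(some a, some b)] := by
  rw [padWord_eq_zip_padRight, padWord_eq_zip_padRight]
  simp only [List.length_append, List.length_singleton, ← h, max_self]
  rw [padRight_append_singleton rfl, padRight_append_singleton h.symm,
    List.zip_append (by simp [length_padRight, h])]
  rfl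

theorem padWord_append_singleton_left {u v : List S} (h : v.length ≤ u.length) (a : S) :
    padWord (u ++ [a]) v = padWord u v ++ [(some a, none)] := by
  rw [padWord_eq_zip_padRight, padWord_eq_zip_padRight]
  simp only [List.length_append, List.length_singleton, max_eq_left h,
    max_eq_left (h.trans (Nat.le_succ _))]
  rw [padRight_append_singleton rfl, padRight_succ h,
    List.zip_append (by simp [length_padRight, h])]
  rfl

theorem padWord_append_singleton_right {u v : List S} (h : u.length ≤ v.length) (b : S) :
    padWord u (v ++ [b]) = padWord u v ++ [(none, some b)] := by
  rw [padWord_eq_zip_padRight, padWord_eq_zip_padRight]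
  simp only [List.length_append, List.length_singleton, max_eq_right h,
    max_eq_right (h.trans (Nat.le_succ _))]
  rw [padRight_append_singleton rfl, padRight_succ h,
    List.zip_append (by simp [length_padRight, h])]
  rfl

def unpadFst (w : List (Option S × Option S)) : List S := (w.map Prod.fst).reduceOption

def unpadSnd (w : List (Option S × Option S)) : List S := (w.map Prod.snd).reduceOption

@[simp] theorem unpadFst_append (x y : List (Option S × Option S)) :
    unpadFst (x ++ y) = unpadFst x ++ unpadFst y := by
  simp [unpadFst, List.reduceOption_append]

@[simp] theorem unpadSnd_append (x y : List (Option S × Option S)) :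
    unpadSnd (x ++ y) = unpadSnd x ++ unpadSnd y := by
  simp [unpadSnd, List.reduceOption_append]

theorem length_unpadFst_le (w : List (Option S × Option S)) : (unpadFst w).length ≤ w.length :=
  (List.reduceOption_length_le _).trans_eq (List.length_map _)

theorem length_unpadSnd_le (w : List (Option S × Option S)) : (unpadSnd w).length ≤ w.length :=
  (List.reduceOption_length_le _).trans_eq (List.length_map _)

theorem unpadFst_take_padWord (u v : List S) (j : ℕ) :
    unpadFst ((padWord u v).take j) = u.take j := by
  rw [unpadFst, List.map_take, padWord_eq_zip_padRight,
    List.map_fst_zip (by simp [length_padRight]), reduceOption_take_padRight]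

theorem unpadSnd_take_padWord (u v : List S) (j : ℕ) :
    unpadSnd ((padWord u v).take j) = v.take j := by
  rw [unpadSnd, List.map_take, padWord_eq_zip_padRight,
    List.map_snd_zip (by simp [length_padRight]), reduceOption_take_padRight]

@[simp] theorem unpadFst_padWord (u v : List S) : unpadFst (padWord u v) = u := by
  simpa [List.take_of_length_le, length_padWord] using
    unpadFst_take_padWord u v (max u.length v.length)

@[simp] theorem unpadSnd_padWord (u v : List S) : unpadSnd (padWord u v) = v := by
  simpa [List.take_of_length_le, length_padWord] using
    unpadSnd_take_padWord u v (max u.length v.length)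

end Padding

section PaddingDFA

variable {S : Type*}

/- The state `some (b₁, b₂)` records whether the first, resp. second, word has already ended;
`none` is a dead state. -/
def paddingDFA (α : Type*) : DFA (Option α × Option α) (Option (Bool × Bool)) where
  step q c := q.bind fun p =>
    if (p.1 && c.1.isSome) || (p.2 && c.2.isSome) || (c.1.isNone && c.2.isNone) then none
    else some (c.1.isNone, c.2.isNone)
  start := some (false, false)
  accept := {q | q.isSome}

theorem paddingDFA_eval_padWord (u v : List S) :
    (paddingDFA S).eval (padWord u v) =
      some (decide (u.length < v.length), decide (v.length < u.length)) := by
  induction u, v using List.reverseRecOn₂ with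
  | nil => rfl
  | both u v a b h ih =>
    rw [padWord_append_singleton_both h, DFA.eval_append_singleton, ih]
    simp [paddingDFA, h]
  | left u v a h ih =>
    rw [padWord_append_singleton_left h, DFA.eval_append_singleton, ih]
    simp [paddingDFA, not_lt.2 h, not_lt.2 (h.trans (Nat.le_succ _)), Nat.lt_succ_of_le h]
  | right u v b h ih =>
    rw [padWord_append_singleton_right h, DFA.eval_append_singleton, ih]
    simp [paddingDFA, not_lt.2 h, not_lt.2 (h.trans (Nat.le_succ _)), Nat.lt_succ_of_le h]

theorem exists_padWord_eq_of_paddingDFA_eval_ne_none {w : List (Option S × Option S)}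
    (hw : (paddingDFA S).eval w ≠ none) : ∃ u v, padWord u v = w := by
  induction w using List.reverseRecOn with
  | nil => exact ⟨[], [], rfl⟩
  | append_singleton w c ih =>
    rw [DFA.eval_append_singleton] at hw
    obtain ⟨u, v, rfl⟩ := ih fun h => hw (by rw [h]; rfl)
    rw [paddingDFA_eval_padWord] at hw
    rcases c with ⟨_ | a, _ | b⟩
    · simp [paddingDFA] at hw
    · exact ⟨u, v ++ [b], padWord_append_singleton_right (by simpa [paddingDFA] using hw) b⟩
    · exact ⟨u ++ [a], v, padWord_append_singleton_left (by simpa [paddingDFA] using hw) a⟩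
    · exact ⟨u ++ [a], v ++ [b],
        padWord_append_singleton_both (by simpa [paddingDFA] using hw) a b⟩

theorem accepts_paddingDFA : (paddingDFA S).accepts = {w | ∃ u v, padWord u v = w} := by
  ext w
  refine ⟨fun hw => exists_padWord_eq_of_paddingDFA_eval_ne_none
    (Option.isSome_iff_ne_none.1 hw), ?_⟩
  rintro ⟨u, v, rfl⟩
  rw [DFA.mem_accepts, paddingDFA_eval_padWord]
  rfl

end PaddingDFA

namespace DFA

variable {α σ : Type*}

def skipNone (M : DFA α σ) : DFA (Option α) σ where
  step q c := c.elim q (M.step q)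
  start := M.start
  accept := M.accept

theorem evalFrom_skipNone (M : DFA α σ) (q : σ) (x : List (Option α)) :
    M.skipNone.evalFrom q x = M.evalFrom q x.reduceOption := by
  induction x generalizing q with
  | nil => rfl
  | cons c x ih =>
    cases c with
    | none => exact ih q
    | some a => exact ih (M.step q a)

theorem accepts_skipNone (M : DFA α σ) :
    M.skipNone.accepts = List.reduceOption ⁻¹' M.accepts := by
  ext x
  exact Iff.of_eq (congrArg (· ∈ M.accept) (M.evalFrom_skipNone M.start x))

end DFA

namespace Language

variable {α β : Type*} {L : Language α}

theorem IsRegular.preimage_map (hL : L.IsRegular) (f : β → α) :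
    Language.IsRegular (List.map f ⁻¹' L) := by
  obtain ⟨σ, _, M, rfl⟩ := hL
  exact ⟨σ, inferInstance, M.comap f, M.accepts_comap f⟩

theorem IsRegular.preimage_reduceOption (hL : L.IsRegular) :
    Language.IsRegular (List.reduceOption ⁻¹' L) := by
  obtain ⟨σ, _, M, rfl⟩ := hL
  exact ⟨σ, inferInstance, M.skipNone, M.accepts_skipNone⟩

theorem IsRegular.exists_completion_length_lt (hL : L.IsRegular) :
    ∃ N, ∀ x z, x ++ z ∈ L → ∃ y : List α, y.length < N ∧ x ++ y ∈ L := by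
  obtain ⟨σ, _, M, rfl⟩ := hL
  refine ⟨Fintype.card σ, fun x z hz => ?_⟩
  induction hn : z.length using Nat.strong_induction_on generalizing z with
  | _ n ih =>
    by_cases hlen : z.length < Fintype.card σ
    · exact ⟨z, hlen, hz⟩
    obtain ⟨q, a, b, c, rfl, -, hb, ha, -, hc⟩ := M.evalFrom_split (not_lt.1 hlen) rfl
    refine ih (a ++ c).length ?_ (a ++ c) ?_ rfl
    · simp only [List.length_append] at hn ⊢
      have := List.length_pos_iff.2 hb
      omega
    · rw [DFA.mem_accepts, DFA.eval, DFA.evalFrom_of_append] at hz ⊢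
      rwa [DFA.evalFrom_of_append, ha, hc]

theorem IsRegular.image2_padWord (hL : L.IsRegular) :
    Language.IsRegular (Set.image2 padWord L L) := by
  have h : Set.image2 padWord L L = (List.map Prod.fst ⁻¹' (List.reduceOption ⁻¹' L) ⊓
      List.map Prod.snd ⁻¹' (List.reduceOption ⁻¹' L)) ⊓ (paddingDFA α).accepts := by
    ext w
    rw [accepts_paddingDFA]
    constructor
    · rintro ⟨u, hu, v, hv, rfl⟩
      exact ⟨⟨show unpadFst (padWord u v) ∈ L by rwa [unpadFst_padWord],
        show unpadSnd (padWord u v) ∈ L by rwa [unpadSnd_padWord]⟩, u, v, rfl⟩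
    · rintro ⟨⟨hu, hv⟩, u, v, rfl⟩
      exact ⟨u, by rwa [← unpadFst_padWord u v], v, by rwa [← unpadSnd_padWord u v], rfl⟩
  rw [h]
  have hfst := hL.preimage_reduceOption.preimage_map (Prod.fst : Option α × Option α → _)
  have hsnd := hL.preimage_reduceOption.preimage_map (Prod.snd : Option α × Option α → _)
  exact (hfst.inf hsnd).inf ⟨_, inferInstance, paddingDFA α, rfl⟩

end Language

section WordDifferences

variable {G : Type*} [Group G] {β : Type*}

def pairDiff (f : β → G) (x : List (β × β)) : G :=
  (wordEval f (x.map Prod.fst))⁻¹ * wordEval f (x.map Prod.snd)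

theorem pairDiff_append_singleton (f : β → G) (x : List (β × β)) (c : β × β) :
    pairDiff f (x ++ [c]) = (f c.1)⁻¹ * pairDiff f x * f c.2 := by
  simp [pairDiff, mul_assoc]

open Classical in
noncomputable def wordDiffDFA (f : β → G) (D : Set G) (t : G) : DFA (β × β) (Option D) where
  step q c := q.bind fun g => if h : (f c.1)⁻¹ * g * f c.2 ∈ D then some ⟨_, h⟩ else none
  start := if h : (1 : G) ∈ D then some ⟨1, h⟩ else none
  accept := {q | q.map Subtype.val = some t}

open Classical in
theorem map_val_wordDiffDFA_eval (f : β → G) (D : Set G) (t : G) (x : List (β × β)) :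
    ((wordDiffDFA f D t).eval x).map Subtype.val =
      if ∀ y, y <+: x → pairDiff f y ∈ D then some (pairDiff f x) else none := by
  induction x using List.reverseRecOn with
  | nil =>
    by_cases h : (1 : G) ∈ D <;> simp [wordDiffDFA, pairDiff, h]
  | append_singleton x c ih =>
    have hstep : ∀ q, ((wordDiffDFA f D t).step q c).map Subtype.val =
        (q.map Subtype.val).bind fun g =>
          if (f c.1)⁻¹ * g * f c.2 ∈ D then some ((f c.1)⁻¹ * g * f c.2) else none := by
      rintro (_ | g)
      · rfl
      · simp only [wordDiffDFA, Option.bind_some, Option.map_some]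
        split_ifs <;> rfl
    rw [DFA.eval_append_singleton, hstep, ih]
    simp only [List.prefix_concat_iff, or_imp, forall_and, forall_eq, pairDiff_append_singleton]
    split_ifs <;> simp_all

theorem mem_wordDiffDFA_accepts_iff (f : β → G) (D : Set G) (t : G) (x : List (β × β)) :
    x ∈ (wordDiffDFA f D t).accepts ↔ (∀ y, y <+: x → pairDiff f y ∈ D) ∧ pairDiff f x = t := by
  change ((wordDiffDFA f D t).eval x).map Subtype.val = some t ↔ _
  rw [map_val_wordDiffDFA_eval]
  split_ifs with h
  · rw [Option.some_inj]
    exact ⟨fun h' => ⟨h, h'⟩, And.right⟩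
  · simp [h]

end WordDifferences

section Automatic

variable {G : Type*} [Group G] {S : Type*} {e : S → G}

def IsMultiplier (e : S → G) (L : Language S) (s : Option S)
    (M : Language (Option S × Option S)) : Prop :=
  ∀ u v, u ∈ L → v ∈ L → (padWord u v ∈ M ↔ wordEval e u = wordEval e v * padEval e s)

theorem nonempty_automaticStructure_iff :
    Nonempty (AutomaticStructure G S e) ↔
      ∃ L : Language S, L.IsRegular ∧ (∀ g : G, ∃ u ∈ L, wordEval e u = g) ∧
        ∀ s : Option S, ∃ M : Language (Option S × Option S), M.IsRegular ∧
          IsMultiplier e L s M := by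
  constructor
  · rintro ⟨A⟩
    exact ⟨A.L.accepts, ⟨A.σL, A.instFinL, A.L, rfl⟩, A.surjective, fun s =>
      ⟨(A.M s).accepts, ⟨A.σM s, A.instFinM s, A.M s, rfl⟩, A.mult s⟩⟩
  · rintro ⟨_, ⟨σ, hσ, L, rfl⟩, hsurj, hM⟩
    choose M hMreg hmult using hM
    choose τ hτ DM hDM using hMreg
    exact ⟨⟨σ, hσ, L, τ, hτ, DM, hsurj, fun s => hDM s ▸ hmult s⟩⟩

theorem pairDiff_padEval_take_padWord (u v : List S) (j : ℕ) :
    pairDiff (padEval e) ((padWord u v).take j) = (pathAt e u j)⁻¹ * pathAt e v j := by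
  rw [pairDiff, wordEval_padEval, wordEval_padEval, ← unpadFst, ← unpadSnd,
    unpadFst_take_padWord, unpadSnd_take_padWord, pathAt, pathAt]

theorem pairDiff_padEval_padWord (u v : List S) :
    pairDiff (padEval e) (padWord u v) = (wordEval e u)⁻¹ * wordEval e v := by
  simpa [List.take_of_length_le, length_padWord, pathAt] using
    pairDiff_padEval_take_padWord (e := e) u v (max u.length v.length)

theorem FellowTravel.mono {k l : ℕ} {u v : List S} (h : FellowTravel e k u v) (hkl : k ≤ l) :
    FellowTravel e l u v :=
  fun j => (h j).trans hkl

theorem fellowTravel_of_completion (hsym : ∀ a, ∃ b, e b = (e a)⁻¹)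
    {L : Language S} {M : Language (Option S × Option S)} {s : Option S} {N : ℕ}
    (hmult : IsMultiplier e L s M)
    (hN : ∀ x z, x ++ z ∈ Set.image2 padWord L L ⊓ M →
      ∃ y, y.length < N ∧ x ++ y ∈ Set.image2 padWord L L ⊓ M)
    {u v : List S} (hu : u ∈ L) (hv : v ∈ L) (huv : padWord u v ∈ M) :
    FellowTravel e (2 * N) u v := by
  intro j
  obtain ⟨y, hlen, ⟨U, hU, V, hV, hUV⟩, hUVM⟩ := hN ((padWord u v).take j) ((padWord u v).drop j)
    (by rw [List.take_append_drop]; exact ⟨⟨u, hu, v, hv, rfl⟩, huv⟩)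
  have hUeq : U = u.take j ++ unpadFst y := by
    rw [← unpadFst_padWord U V, hUV, unpadFst_append, unpadFst_take_padWord]
  have hVeq : V = v.take j ++ unpadSnd y := by
    rw [← unpadSnd_padWord U V, hUV, unpadSnd_append, unpadSnd_take_padWord]
  have hpath : pathAt e u j * wordEval e (unpadFst y) =
      pathAt e v j * wordEval e (unpadSnd y ++ s.toList) := by
    rw [wordEval_append, wordEval_toList, ← mul_assoc, pathAt, pathAt, ← wordEval_append,
      ← wordEval_append, ← hUeq, ← hVeq]
    exact (hmult U V hU hV).1 (hUV ▸ hUVM)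
  refine (wordDist_le_of_mul_wordEval_eq hsym hpath).trans ?_
  have := length_unpadFst_le y
  have := length_unpadSnd_le y
  have : s.toList.length ≤ 1 := by cases s <;> simp
  simp only [List.length_append]
  omega

theorem exists_fellowTravel_of_isRegular_multipliers [Fintype S]
    (hsym : ∀ a, ∃ b, e b = (e a)⁻¹) (hgen : Subgroup.closure (Set.range e) = ⊤)
    {L : Language S} (hL : L.IsRegular)
    (hM : ∀ s : Option S, ∃ M : Language (Option S × Option S), M.IsRegular ∧
      IsMultiplier e L s M) :
    ∃ k : ℕ, ∀ u ∈ L, ∀ v ∈ L,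
      wordDist e (wordEval e u) (wordEval e v) ≤ 1 → FellowTravel e k u v := by
  choose M hMreg hmult using hM
  choose N hN using fun s => (hL.image2_padWord.inf (hMreg s)).exists_completion_length_lt
  refine ⟨2 * Finset.univ.sup N, fun u hu v hv hd => ?_⟩
  obtain ⟨s, hs⟩ := exists_eq_mul_padEval_of_wordDist_le_one hsym hgen hd
  refine (fellowTravel_of_completion hsym (hmult s) (hN s) hu hv
    ((hmult s u v hu hv).2 hs)).mono ?_
  exact Nat.mul_le_mul_left 2 (Finset.le_sup (Finset.mem_univ s))

theorem exists_isRegular_multiplier_of_fellowTravel [Finite S]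
    (hsym : ∀ a, ∃ b, e b = (e a)⁻¹) (hgen : Subgroup.closure (Set.range e) = ⊤)
    {L : Language S} {k : ℕ} (hk : ∀ u ∈ L, ∀ v ∈ L,
      wordDist e (wordEval e u) (wordEval e v) ≤ 1 → FellowTravel e k u v) (s : Option S) :
    ∃ M : Language (Option S × Option S), M.IsRegular ∧ IsMultiplier e L s M := by
  set ball := wordEval e '' {w : List S | w.length ≤ k}
  have : Fintype ball := ((List.finite_length_le S k).image _).fintype
  refine ⟨(wordDiffDFA (padEval e) ball (padEval e s)⁻¹).accepts,
    Language.isRegular_iff.2 ⟨_, inferInstance, _, rfl⟩, fun u v hu hv => ?_⟩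
  have hmul : (wordEval e u)⁻¹ * wordEval e v = (padEval e s)⁻¹ ↔
      wordEval e u = wordEval e v * padEval e s := by
    rw [inv_mul_eq_iff_eq_mul, eq_mul_inv_iff_mul_eq, eq_comm]
  rw [mem_wordDiffDFA_accepts_iff, pairDiff_padEval_padWord, hmul]
  refine ⟨And.right, fun h => ⟨fun y hy => ?_, h⟩⟩
  have hd : wordDist e (wordEval e u) (wordEval e v) ≤ 1 :=
    (wordDist_le_of_mul_wordEval_eq hsym (w₁ := []) (w₂ := s.toList) (by simpa using h)).trans
      (by cases s <;> simp)
  rw [List.prefix_iff_eq_take.1 hy, pairDiff_padEval_take_padWord]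
  exact exists_wordEval_eq_of_wordDist_le hsym hgen (hk u hu v hv hd y.length)

end Automatic

/-- A finitely generated group `G`, with finite symmetric generating alphabet
`Ã = S`, is automatic if and only if there exist a regular language `L ⊆ Ã*`
mapping onto `G` and a constant `k` such that any two words `u, v ∈ L` whose
images are at word-metric distance at most `1` `k`-fellow-travel. -/
theorem automatic_iff_regular_fellowTravel
    {G : Type*} [Group G] {S : Type*} [Fintype S] (e : S → G)
    (hsym : ∀ a : S, ∃ b : S, e b = (e a)⁻¹)
    (hgen : Subgroup.closure (Set.range e) = ⊤) :
    Nonempty (AutomaticStructure G S e) ↔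
      ∃ L : Language S, L.IsRegular ∧
        (∀ g : G, ∃ u ∈ L, wordEval e u = g) ∧
        ∃ k : ℕ, ∀ u ∈ L, ∀ v ∈ L,
          wordDist e (wordEval e u) (wordEval e v) ≤ 1 → FellowTravel e k u v := by
  rw [nonempty_automaticStructure_iff]
  constructor
  · rintro ⟨L, hL, hsurj, hM⟩
    exact ⟨L, hL, hsurj, exists_fellowTravel_of_isRegular_multipliers hsym hgen hL hM⟩
  · rintro ⟨L, hL, hsurj, k, hk⟩
    exact ⟨L, hL, hsurj, exists_isRegular_multiplier_of_fellowTravel hsym hgen hk⟩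
end

section
/- Every automatic group admits an automatic structure with uniqueness: if G is automatic with generating set A, then there is an automatic structure (L, M) for G such that the evaluation map from the accepted language L(L) to G is a bijection (L(L) is a rational cross-section of G). -/
section PadWord

variable {α : Type*}

@[simp] theorem padWord_nil_nil : padWord ([] : List α) [] = [] := rfl

@[simp] theorem padWord_cons_cons (b a : α) (v u : List α) :
    padWord (b :: v) (a :: u) = (some b, some a) :: padWord v u := by
  simp [padWord, Nat.succ_max_succ]

@[simp] theorem padWord_nil_cons (a : α) (u : List α) :
    padWord [] (a :: u) = (none, some a) :: padWord [] u := by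
  simp [padWord, List.replicate_succ]

@[simp] theorem padWord_cons_nil (b : α) (v : List α) :
    padWord (b :: v) [] = (some b, none) :: padWord v [] := by
  simp [padWord, List.replicate_succ]

@[simp] theorem filterMap_fst_padWord : ∀ v u : List α, (padWord v u).filterMap Prod.fst = v
  | [], [] => rfl
  | [], _ :: u => by simpa using filterMap_fst_padWord [] u
  | b :: v, [] => by simpa using filterMap_fst_padWord v []
  | b :: v, _ :: u => by simpa using filterMap_fst_padWord v u

end PadWord

namespace DFA

variable {α β σ : Type*}

theorem cons_mem_acceptsFrom (M : DFA α σ) {s : σ} {a : α} {x : List α} :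
    a :: x ∈ M.acceptsFrom s ↔ x ∈ M.acceptsFrom (M.step s a) := Iff.rfl

def comapFilterMap (f : α → Option β) (M : DFA β σ) : DFA α σ where
  step s a := (f a).elim s (M.step s)
  start := M.start
  accept := M.accept

theorem evalFrom_comapFilterMap (f : α → Option β) (M : DFA β σ) (s : σ) (x : List α) :
    (M.comapFilterMap f).evalFrom s x = M.evalFrom s (x.filterMap f) := by
  induction x generalizing s with
  | nil => rfl
  | cons a x ih =>
    have hstep : (M.comapFilterMap f).step s a = (f a).elim s (M.step s) := rfl
    rw [evalFrom_cons, hstep, List.filterMap_cons]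
    cases f a <;> exact ih _

theorem accepts_comapFilterMap (f : α → Option β) (M : DFA β σ) :
    (M.comapFilterMap f).accepts = List.filterMap f ⁻¹' M.accepts := by
  ext x
  change (M.comapFilterMap f).evalFrom M.start x ∈ M.accept ↔
    M.evalFrom M.start (x.filterMap f) ∈ M.accept
  rw [evalFrom_comapFilterMap]

/-- The state records the comparison of the first differing letters; a padding letter means
that the first word is strictly shorter. -/
def padShortlex (r : α → α → Prop) [DecidableRel r] [DecidableEq α] :
    DFA (Option α × Option α) Ordering where
  step
    | .eq, (some b, some a) => if r b a then .lt else if b = a then .eq else .gt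
    | _, (none, _) => .lt
    | o, _ => o
  start := .eq
  accept := {.lt}

variable (r : α → α → Prop) [DecidableRel r] [DecidableEq α]

theorem padWord_mem_acceptsFrom_padShortlex {v u : List α} (h : v.length ≤ u.length)
    (o : Ordering) : padWord v u ∈ (padShortlex r).acceptsFrom o ↔
      v.length < u.length ∨ o = .lt ∨ (o = .eq ∧ List.Lex r v u) := by
  induction u generalizing v o with
  | nil =>
    obtain rfl : v = [] := List.eq_nil_of_length_eq_zero (Nat.le_zero.mp h)
    simp [mem_acceptsFrom, padShortlex]
  | cons a u ih =>
    cases v with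
    | nil =>
      have hstep : (padShortlex r).step o (none, some a) = .lt := by cases o <;> rfl
      rw [padWord_nil_cons, cons_mem_acceptsFrom, hstep, ih (Nat.zero_le _)]
      simp
    | cons b v =>
      have h' : v.length ≤ u.length := Nat.le_of_succ_le_succ h
      rw [padWord_cons_cons, cons_mem_acceptsFrom, ih h']
      simp only [List.length_cons, Nat.add_lt_add_iff_right, List.cons_lex_cons_iff]
      cases o <;> simp [padShortlex]
      tauto

theorem padWord_mem_accepts_padShortlex {v u : List α} (h : v.length ≤ u.length) :
    padWord v u ∈ (padShortlex r).accepts ↔ List.Shortlex r v u := by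
  rw [accepts, padWord_mem_acceptsFrom_padShortlex r h, List.shortlex_def]
  rcases h.lt_or_eq with hlt | heq <;> simp [padShortlex, *]

end DFA

theorem Language.IsRegular.preimage_filterMap {α β : Type*} {L : Language β}
    (h : L.IsRegular) (f : α → Option β) : Language.IsRegular (List.filterMap f ⁻¹' L) := by
  obtain ⟨σ, _, M, rfl⟩ := h
  exact ⟨σ, inferInstance, M.comapFilterMap f, M.accepts_comapFilterMap f⟩

namespace NFA

variable {α σ : Type*}

/-- Reads `u` while guessing, letter by letter, a word `v` no longer than `u`, and runs `M` on
`padWord v u`; the flag records that `v` has ended. -/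
def padProj (M : DFA (Option α × Option α) σ) : NFA α (σ × Bool) where
  step
    | (s, false), a => Set.range (fun b => (M.step s (some b, some a), false)) ∪
        {(M.step s (none, some a), true)}
    | (s, true), a => {(M.step s (none, some a), true)}
  start := {(M.start, false)}
  accept := {p | p.1 ∈ M.accept}

theorem mem_acceptsFrom_iff_exists_singleton {β : Type*} (M : NFA α β) {S : Set β}
    {x : List α} : x ∈ M.acceptsFrom S ↔ ∃ t ∈ S, x ∈ M.acceptsFrom {t} := by
  simp only [mem_acceptsFrom, mem_evalFrom_iff_exists (S := S)]
  exact ⟨fun ⟨s, hs, t, ht, h⟩ => ⟨t, ht, s, hs, h⟩, fun ⟨t, ht, s, hs, h⟩ => ⟨s, hs, t, ht, h⟩⟩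

variable (M : DFA (Option α × Option α) σ)

theorem mem_acceptsFrom_padProj_true {s : σ} {u : List α} :
    u ∈ (padProj M).acceptsFrom {(s, true)} ↔ padWord [] u ∈ M.acceptsFrom s := by
  induction u generalizing s with
  | nil => simp [padProj, DFA.mem_acceptsFrom]
  | cons a u ih =>
    rw [cons_mem_acceptsFrom, stepSet_singleton, padWord_nil_cons, DFA.cons_mem_acceptsFrom]
    exact ih

theorem mem_acceptsFrom_padProj_false {s : σ} {u : List α} :
    u ∈ (padProj M).acceptsFrom {(s, false)} ↔
      ∃ v : List α, v.length ≤ u.length ∧ padWord v u ∈ M.acceptsFrom s := by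
  induction u generalizing s with
  | nil => simp [padProj, DFA.mem_acceptsFrom]
  | cons a u ih =>
    have hstep : (padProj M).step (s, false) a =
        Set.range (fun b => (M.step s (some b, some a), false)) ∪
          {(M.step s (none, some a), true)} := rfl
    rw [cons_mem_acceptsFrom, stepSet_singleton, hstep, mem_acceptsFrom_iff_exists_singleton]
    simp only [Set.mem_union, Set.mem_range, Set.mem_singleton_iff, or_and_right, exists_or,
      exists_exists_eq_and, exists_eq_left, ih, mem_acceptsFrom_padProj_true]
    constructor
    · rintro (⟨b, v, hv, hw⟩ | hw)
      · exact ⟨b :: v, Nat.succ_le_succ hv, by rwa [padWord_cons_cons]⟩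
      · exact ⟨[], Nat.zero_le _, by rwa [padWord_nil_cons]⟩
    · rintro ⟨_ | ⟨b, v⟩, hv, hw⟩
      · rw [padWord_nil_cons] at hw
        exact Or.inr hw
      · rw [padWord_cons_cons] at hw
        exact Or.inl ⟨b, v, Nat.le_of_succ_le_succ hv, hw⟩

end NFA

theorem Language.IsRegular.exists_padWord {α : Type*} {K : Language (Option α × Option α)}
    (hK : K.IsRegular) :
    Language.IsRegular {u : List α | ∃ v : List α, v.length ≤ u.length ∧ padWord v u ∈ K} := by
  classical
  obtain ⟨σ, _, M, rfl⟩ := hK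
  refine ⟨Set (σ × Bool), inferInstance, (NFA.padProj M).toDFA, ?_⟩
  ext u
  rw [NFA.toDFA_correct, NFA.accepts_eq_acceptsFrom_start]
  exact NFA.mem_acceptsFrom_padProj_false M

namespace AutomaticStructure

variable {G : Type*} [Group G] {S : Type*} {e : S → G} (AS : AutomaticStructure G S e)

theorem exists_accepts_eq {L : Language S} (hL : L.IsRegular) (hsub : L ≤ AS.L.accepts)
    (hsurj : ∀ g : G, ∃ u ∈ L, wordEval e u = g) :
    ∃ AS' : AutomaticStructure G S e, AS'.L.accepts = L := by
  obtain ⟨σ, _, M, rfl⟩ := hL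
  exact ⟨{ AS with
    σL := σ, instFinL := inferInstance, L := M, surjective := hsurj
    mult := fun s u v hu hv => AS.mult s u v (hsub hu) (hsub hv) }, rfl⟩

def shortlexReps (r : S → S → Prop) : Language S :=
  {u | u ∈ AS.L.accepts ∧ ∀ v ∈ AS.L.accepts, wordEval e v = wordEval e u → ¬ List.Shortlex r v u}

theorem padWord_mem_accepts_M_none_iff {u v : List S} (hu : u ∈ AS.L.accepts)
    (hv : v ∈ AS.L.accepts) : padWord u v ∈ (AS.M none).accepts ↔ wordEval e u = wordEval e v := by
  rw [AS.mult none u v hu hv, padEval, mul_one]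

theorem isRegular_shortlexReps (r : S → S → Prop) : (AS.shortlexReps r).IsRegular := by
  classical
  have hL : AS.L.accepts.IsRegular := ⟨AS.σL, AS.instFinL, AS.L, rfl⟩
  have hM : (AS.M none).accepts.IsRegular := ⟨AS.σM none, AS.instFinM none, AS.M none, rfl⟩
  set K : Language (Option S × Option S) :=
    (AS.M none).accepts ⊓ List.filterMap Prod.fst ⁻¹' AS.L.accepts ⊓ (DFA.padShortlex r).accepts
  have hK : K.IsRegular :=
    (hM.inf (hL.preimage_filterMap Prod.fst)).inf ⟨Ordering, inferInstance, _, rfl⟩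
  suffices AS.shortlexReps r =
      AS.L.accepts ⊓ {u | ∃ v : List S, v.length ≤ u.length ∧ padWord v u ∈ K}ᶜ by
    rw [this]
    exact hL.inf hK.exists_padWord.compl
  ext u
  refine and_congr_right fun hu => ?_
  change (∀ v ∈ AS.L.accepts, _ → ¬ _) ↔ ¬ ∃ v : List S, v.length ≤ u.length ∧ padWord v u ∈ K
  simp only [not_exists, not_and]
  refine forall_congr' fun v => ⟨fun h hlen ⟨⟨hvu, hv⟩, hlt⟩ => ?_, fun h hv heq hlt => ?_⟩
  · replace hv : (padWord v u).filterMap Prod.fst ∈ AS.L.accepts := hv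
    rw [filterMap_fst_padWord] at hv
    exact h hv ((AS.padWord_mem_accepts_M_none_iff hv hu).1 hvu)
      ((DFA.padWord_mem_accepts_padShortlex r hlen).1 hlt)
  · have hlen : v.length ≤ u.length := (List.shortlex_def.1 hlt).elim le_of_lt (·.1.le)
    refine h hlen ⟨⟨(AS.padWord_mem_accepts_M_none_iff hv hu).2 heq, ?_⟩,
      (DFA.padWord_mem_accepts_padShortlex r hlen).2 hlt⟩
    show (padWord v u).filterMap Prod.fst ∈ AS.L.accepts
    rwa [filterMap_fst_padWord]

variable {r : S → S → Prop}

theorem exists_mem_shortlexReps (hr : WellFounded r) (g : G) :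
    ∃ u ∈ AS.shortlexReps r, wordEval e u = g := by
  obtain ⟨u₀, hu₀, rfl⟩ := AS.surjective g
  obtain ⟨u, ⟨hu, hug⟩, hmin⟩ := (List.Shortlex.wf hr).has_min
    {u | u ∈ AS.L.accepts ∧ wordEval e u = wordEval e u₀} ⟨u₀, hu₀, rfl⟩
  exact ⟨u, ⟨hu, fun v hv hvu => hmin v ⟨hv, hvu.trans hug⟩⟩, hug⟩

theorem eq_of_mem_shortlexReps [Std.Trichotomous r] {u v : List S}
    (hu : u ∈ AS.shortlexReps r) (hv : v ∈ AS.shortlexReps r)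
    (huv : wordEval e u = wordEval e v) : u = v := by
  rcases trichotomous_of (List.Shortlex r) u v with h | h | h
  · exact absurd h (hv.2 u hu.1 huv)
  · exact h
  · exact absurd h (hu.2 v hv.1 huv.symm)

end AutomaticStructure

theorem exists_automaticStructure_with_uniqueness_general
    {G : Type*} [Group G] {S : Type*} (e : S → G)
    (h : Nonempty (AutomaticStructure G S e)) :
    ∃ AS : AutomaticStructure G S e,
      ∀ u ∈ AS.L.accepts, ∀ v ∈ AS.L.accepts, wordEval e u = wordEval e v → u = v := by
  obtain ⟨AS⟩ := h
  obtain ⟨AS', hAS'⟩ := AS.exists_accepts_eq (AS.isRegular_shortlexReps WellOrderingRel)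
    (fun _ hu => hu.1) (AS.exists_mem_shortlexReps WellOrderingRel.isWellOrder.wf)
  refine ⟨AS', fun u hu v hv => ?_⟩
  rw [hAS'] at hu hv
  exact AS.eq_of_mem_shortlexReps hu hv

/-- Every automatic group admits an automatic structure with uniqueness: if `G` is
automatic (with finite symmetric generating alphabet `S`), then there is an automatic
structure whose language of normal forms maps *bijectively* onto `G` (a rational
cross-section); surjectivity being part of the definition, this amounts to injectivity
of the evaluation map on the accepted language. -/
theorem exists_automaticStructure_with_uniqueness
    {G : Type*} [Group G] {S : Type*} [Fintype S] (e : S → G)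
    (hsym : ∀ a : S, ∃ b : S, e b = (e a)⁻¹)
    (hgen : Subgroup.closure (Set.range e) = ⊤)
    (h : Nonempty (AutomaticStructure G S e)) :
    ∃ AS : AutomaticStructure G S e,
      ∀ u ∈ AS.L.accepts, ∀ v ∈ AS.L.accepts, wordEval e u = wordEval e v → u = v :=
  exists_automaticStructure_with_uniqueness_general e h
end

section
/- Brunner–Sidki: for every n ≥ 1, the affine group ℤⁿ ⋊ GLₙ(ℤ) is an automata group; that is, there exists an invertible Mealy automaton M over a finite alphabet such that the group G(M) generated by the permutations of A* computed by its states is isomorphic to ℤⁿ ⋊ GLₙ(ℤ). -/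
/-- The transformation of `A*` computed by the state `q` of the Mealy automaton with
transition function `τ : Q × A → A × Q` (written `q·a = b·q'` when `τ (q,a) = (b,q')`). -/
def mealyRun {A Q : Type*} (τ : Q × A → A × Q) : Q → List A → List A
  | _, [] => []
  | q, a :: v => (τ (q, a)).1 :: mealyRun τ (τ (q, a)).2 v

/-- A map `A* → A*` is automatic if it is computed by a state of some Mealy automaton
with finitely many states. -/
def IsAutomaticMap {A : Type*} (f : List A → List A) : Prop :=
  ∃ (Q : Type) (_ : Fintype Q) (τ : Q × A → A × Q) (q : Q), f = mealyRun τ q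

/-- A Mealy automaton is invertible if at every state, the output-letter map
`a ↦ first component of τ (q, a)` is a permutation of the alphabet. -/
def MealyInvertible {A Q : Type*} (τ : Q × A → A × Q) : Prop :=
  ∀ q : Q, Function.Bijective (fun a => (τ (q, a)).1)

/-!
Write integer vectors in base 2, least significant digit first: a word of length `k` over the
alphabet `A = {0,1}ⁿ` is a residue class of `ℤⁿ` modulo `2ᵏ`. An affine map `z ↦ a z + m`
preserves congruences modulo every `2ᵏ`, hence acts on the words of each length; this is a
faithful action of the affine group on `A*`. Reading the first digit `d` of `z = d + 2 z'` gives
`a z + m = (a d + m) + 2 a z'`, so the first output digit is `a d + m mod 2`, and what remains is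
the map `z' ↦ a z' + ⌊(a d + m) / 2⌋`: the state of `z ↦ a z + m` outputs that digit and moves to
that map. The linear part never changes, and once `|a d| ≤ M` for all digits `d`, translation
parts bounded by `M` stay bounded by `M`, so finitely many linear parts give a finite automaton.
With the elementary transvections and sign changes, which generate `GLₙ(ℤ)` by the Euclidean
algorithm, and translation parts in `[-2, 2]ⁿ`, which include the unit vectors, the states
generate the whole affine group.
-/

theorem mealyInvertible_of_injective {A Q : Type*} [Finite A] (τ : Q × A → A × Q)
    (h : ∀ q, Function.Injective (mealyRun τ q)) : MealyInvertible τ := by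
  refine fun q => Finite.injective_iff_bijective.mp fun a b hab => ?_
  simpa using @h q [a] [b] (by simp only [mealyRun, hab])

theorem AffineEquiv.apply_add_smul {k V : Type*} [Ring k] [AddCommGroup V] [Module k V]
    (f : V ≃ᵃ[k] V) (z y : V) (c : k) : f (z + c • y) = f z + c • f.linear y := by
  rw [add_comm z, ← vadd_eq_add, f.map_vadd, vadd_eq_add, map_smul, add_comm]

theorem AffineEquiv.constVAdd_mul_linear {k V : Type*} [Ring k] [AddCommGroup V] [Module k V]
    (f : V ≃ᵃ[k] V) : AffineEquiv.constVAdd k V (f 0) * f.linear.toAffineEquiv = f := by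
  ext z : 1
  simpa [add_comm] using (f.map_vadd 0 z).symm

namespace BrunnerSidki

open Matrix

section Digits

variable {ι : Type*}

def digit (z : ι → ℤ) : ι → ZMod 2 := fun i => (z i : ZMod 2)

def digitVal (d : ι → ZMod 2) : ι → ℤ := fun i => ((d i).val : ℤ)

def half (z : ι → ℤ) : ι → ℤ := fun i => z i / 2

def toDigits : ℕ → (ι → ℤ) → List (ι → ZMod 2)
  | 0, _ => []
  | k + 1, z => digit z :: toDigits k (half z)

def ofDigits : List (ι → ZMod 2) → ι → ℤ
  | [] => 0
  | d :: w => digitVal d + (2 : ℤ) • ofDigits w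

@[simp] theorem length_toDigits (k : ℕ) (z : ι → ℤ) : (toDigits k z).length = k := by
  induction k generalizing z <;> simp [toDigits, *]

theorem digit_add_two_smul (z y : ι → ℤ) : digit (z + (2 : ℤ) • y) = digit z := by
  funext i
  simp [digit, show (2 : ZMod 2) = 0 from rfl]

theorem half_add_two_smul (z y : ι → ℤ) : half (z + (2 : ℤ) • y) = half z + y := by
  funext i
  simp only [half, Pi.add_apply, Pi.smul_apply, smul_eq_mul]
  omega

theorem digitVal_digit_add_two_smul_half (z : ι → ℤ) :
    digitVal (digit z) + (2 : ℤ) • half z = z := by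
  funext i
  simp only [digitVal, digit, half, ZMod.val_intCast, Pi.add_apply, Pi.smul_apply, smul_eq_mul]
  omega

theorem digit_digitVal_add_two_smul (d : ι → ZMod 2) (y : ι → ℤ) :
    digit (digitVal d + (2 : ℤ) • y) = d := by
  rw [digit_add_two_smul]
  funext i
  simp [digit, digitVal]

theorem half_digitVal_add_two_smul (d : ι → ZMod 2) (y : ι → ℤ) :
    half (digitVal d + (2 : ℤ) • y) = y := by
  funext i
  have := (d i).val_lt
  simp only [half, digitVal, Pi.add_apply, Pi.smul_apply, smul_eq_mul]
  omega

theorem toDigits_add_two_pow_smul (k : ℕ) (z y : ι → ℤ) :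
    toDigits k (z + (2 ^ k : ℤ) • y) = toDigits k z := by
  induction k generalizing z with
  | zero => rfl
  | succ k ih =>
    rw [pow_succ', mul_smul]
    simp only [toDigits, digit_add_two_smul, half_add_two_smul, ih]

theorem exists_eq_ofDigits_toDigits_add (k : ℕ) (z : ι → ℤ) :
    ∃ y, z = ofDigits (toDigits k z) + (2 ^ k : ℤ) • y := by
  induction k generalizing z with
  | zero => exact ⟨z, by simp [toDigits, ofDigits]⟩
  | succ k ih =>
    obtain ⟨y, hy⟩ := ih (half z)
    refine ⟨y, ?_⟩
    conv_lhs => rw [← digitVal_digit_add_two_smul_half z, hy]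
    rw [toDigits, ofDigits, pow_succ', mul_smul, smul_add, add_assoc]

theorem toDigits_ofDigits (w : List (ι → ZMod 2)) : toDigits w.length (ofDigits w) = w := by
  induction w with
  | nil => rfl
  | cons d w ih =>
    simp only [List.length_cons, toDigits, ofDigits, digit_digitVal_add_two_smul,
      half_digitVal_add_two_smul, ih]

theorem eq_of_forall_toDigits_eq {z z' : ι → ℤ} (h : ∀ k, toDigits k z = toDigits k z') :
    z = z' := by
  have hdvd : ∀ k i, (2 ^ k : ℤ) ∣ z i - z' i := fun k i => by
    obtain ⟨y, hy⟩ := exists_eq_ofDigits_toDigits_add k z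
    obtain ⟨y', hy'⟩ := exists_eq_ofDigits_toDigits_add k z'
    rw [h k] at hy
    exact ⟨y i - y' i, by
      rw [congrFun hy i, congrFun hy' i]
      simp only [Pi.add_apply, Pi.smul_apply, smul_eq_mul]
      ring⟩
  funext i
  rw [← sub_eq_zero]
  refine Int.eq_zero_of_dvd_of_natAbs_lt_natAbs (hdvd (z i - z' i).natAbs i) ?_
  rw [Int.natAbs_pow]
  exact Nat.lt_two_pow_self

end Digits

section WordMap

variable {ι : Type*}

def wordMap (f : (ι → ℤ) ≃ᵃ[ℤ] (ι → ℤ)) (w : List (ι → ZMod 2)) : List (ι → ZMod 2) :=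
  toDigits w.length (f (ofDigits w))

theorem wordMap_toDigits (f : (ι → ℤ) ≃ᵃ[ℤ] (ι → ℤ)) (k : ℕ) (z : ι → ℤ) :
    wordMap f (toDigits k z) = toDigits k (f z) := by
  obtain ⟨y, hy⟩ := exists_eq_ofDigits_toDigits_add k z
  conv_rhs => rw [hy, f.apply_add_smul, toDigits_add_two_pow_smul]
  rw [wordMap, length_toDigits]

theorem wordMap_wordMap (f g : (ι → ℤ) ≃ᵃ[ℤ] (ι → ℤ)) (w : List (ι → ZMod 2)) :
    wordMap f (wordMap g w) = wordMap (f * g) w := by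
  change wordMap f (toDigits w.length (g (ofDigits w))) = _
  rw [wordMap_toDigits]
  rfl

theorem wordMap_one (w : List (ι → ZMod 2)) : wordMap 1 w = w :=
  toDigits_ofDigits w

def wordPerm : ((ι → ℤ) ≃ᵃ[ℤ] (ι → ℤ)) →* Equiv.Perm (List (ι → ZMod 2)) where
  toFun f :=
    { toFun := wordMap f
      invFun := wordMap f⁻¹
      left_inv w := by rw [wordMap_wordMap, inv_mul_cancel, wordMap_one]
      right_inv w := by rw [wordMap_wordMap, mul_inv_cancel, wordMap_one] }
  map_one' := Equiv.ext wordMap_one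
  map_mul' f g := Equiv.ext fun w => (wordMap_wordMap f g w).symm

theorem wordPerm_apply (f : (ι → ℤ) ≃ᵃ[ℤ] (ι → ℤ)) (w : List (ι → ZMod 2)) :
    wordPerm f w = wordMap f w := rfl

theorem wordPerm_injective : Function.Injective (wordPerm (ι := ι)) := fun f g h =>
  AffineEquiv.ext fun z => eq_of_forall_toDigits_eq fun k => by
    rw [← wordMap_toDigits, ← wordMap_toDigits, ← wordPerm_apply, ← wordPerm_apply, h]

end WordMap

section Generation

variable {ι : Type*} [Fintype ι] [DecidableEq ι]

def transvectionGL {p q : ι} (h : p ≠ q) (c : ℤ) : GL ι ℤ :=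
  SpecialLinearGroup.toGL (SpecialLinearGroup.transvection h c)

theorem transvectionGL_eq_zpow {p q : ι} (h : p ≠ q) (c : ℤ) :
    transvectionGL h c = transvectionGL h 1 ^ c := by
  rw [transvectionGL, transvectionGL, ← map_zpow]
  congr 1
  induction c using Int.induction_on with
  | zero => simp
  | succ c ih => rw [SpecialLinearGroup.transvection_add, ih, _root_.zpow_add_one]
  | pred c ih =>
    rw [sub_eq_add_neg, SpecialLinearGroup.transvection_add, ih,
      ← SpecialLinearGroup.transvection_inv, _root_.zpow_add, _root_.zpow_neg_one]

theorem transvectionGL_mul_apply {p q : ι} (h : p ≠ q) (c : ℤ) (A : GL ι ℤ) (i j : ι) :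
    (↑(transvectionGL h c * A) : Matrix ι ι ℤ) i j
      = if i = p then (A : Matrix ι ι ℤ) p j + c * (A : Matrix ι ι ℤ) q j
        else (A : Matrix ι ι ℤ) i j := by
  split_ifs with hi
  · subst hi
    exact transvection_mul_apply_same i q j c _
  · exact transvection_mul_apply_of_ne p q i j hi c _

def signChange (k : ι) : GL ι ℤ :=
  have h : diagonal (Function.update 1 k (-1)) * diagonal (Function.update 1 k (-1))
      = (1 : Matrix ι ι ℤ) := by
    rw [diagonal_mul_diagonal, ← diagonal_one]
    congr 1
    funext j
    by_cases hj : j = k <;> simp [hj]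
  ⟨_, _, h, h⟩

theorem signChange_mul_apply (k : ι) (A : GL ι ℤ) (i j : ι) :
    (↑(signChange k * A) : Matrix ι ι ℤ) i j
      = if i = k then -(A : Matrix ι ι ℤ) i j else (A : Matrix ι ι ℤ) i j := by
  change (diagonal (Function.update (1 : ι → ℤ) k (-1)) * (A : Matrix ι ι ℤ)) i j = _
  by_cases hi : i = k <;> simp [diagonal_mul, hi]

def FixesCols (s : Finset ι) (A : GL ι ℤ) : Prop :=
  ∀ j ∈ s, ∀ i, (A : Matrix ι ι ℤ) i j = (1 : Matrix ι ι ℤ) i j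

namespace FixesCols

variable {s : Finset ι} {A : GL ι ℤ}

theorem transvectionGL_mul (hA : FixesCols s A) {p q : ι} (h : p ≠ q) (hq : q ∉ s) (c : ℤ) :
    FixesCols s (transvectionGL h c * A) := by
  intro j hj i
  rw [transvectionGL_mul_apply]
  split_ifs with hi
  · rw [hA j hj, hA j hj, one_apply_ne (ne_of_mem_of_not_mem hj hq).symm, mul_zero, add_zero,
      hi]
  · exact hA j hj i

theorem signChange_mul (hA : FixesCols s A) {k : ι} (hk : k ∉ s) :
    FixesCols s (signChange k * A) := by
  intro j hj i
  rw [signChange_mul_apply]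
  split_ifs with hi
  · rw [hA j hj, hi, one_apply_ne (ne_of_mem_of_not_mem hj hk).symm, neg_zero]
  · exact hA j hj i

theorem insert (hA : FixesCols s A) {k : ι}
    (hk : ∀ i, (A : Matrix ι ι ℤ) i k = (1 : Matrix ι ι ℤ) i k) : FixesCols (insert k s) A :=
  Finset.forall_mem_insert _ _ _ |>.2 ⟨hk, hA⟩

/- Row `k` of `A⁻¹` vanishes on the columns in `s`, so it pairs the part of column `k` outside
`s` with `1`: a Bézout relation for these entries. -/
theorem sum_compl_inv_mul_eq_one (hA : FixesCols s A) {k : ι} (hk : k ∉ s) :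
    ∑ q ∈ sᶜ, (↑A⁻¹ : Matrix ι ι ℤ) k q * (A : Matrix ι ι ℤ) q k = 1 := by
  have hrow : ∀ q ∈ s, (↑A⁻¹ : Matrix ι ι ℤ) k q = 0 := fun q hq => by
    have h : (↑(A⁻¹ * A) : Matrix ι ι ℤ) k q = (1 : Matrix ι ι ℤ) k q := by
      rw [inv_mul_cancel, Units.val_one]
    rwa [Units.val_mul, mul_apply, one_apply_ne (ne_of_mem_of_not_mem hq hk).symm,
      Finset.sum_congr rfl fun r _ => by rw [hA q hq r], ← mul_apply, mul_one] at h
  have h : (↑(A⁻¹ * A) : Matrix ι ι ℤ) k k = (1 : Matrix ι ι ℤ) k k := by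
    rw [inv_mul_cancel, Units.val_one]
  rwa [Units.val_mul, mul_apply, one_apply_eq, ← Finset.sum_add_sum_compl s,
    Finset.sum_eq_zero fun q hq => by rw [hrow q hq, zero_mul], zero_add] at h

theorem exists_col_eq_single (hA : FixesCols s A) {k : ι} (hk : k ∉ s)
    (hmin : ∀ p q, p ≠ q → q ∉ s → (A : Matrix ι ι ℤ) q k ≠ 0 →
      ((A : Matrix ι ι ℤ) p k).natAbs < ((A : Matrix ι ι ℤ) q k).natAbs) :
    ∃ q₀ ∉ s, ((A : Matrix ι ι ℤ) q₀ k = 1 ∨ (A : Matrix ι ι ℤ) q₀ k = -1) ∧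
      ∀ p ≠ q₀, (A : Matrix ι ι ℤ) p k = 0 := by
  have hsum := hA.sum_compl_inv_mul_eq_one hk
  obtain ⟨q₀, hq₀, hne⟩ := Finset.exists_ne_zero_of_sum_ne_zero (hsum ▸ one_ne_zero)
  have hq₀k := right_ne_zero_of_mul hne
  rw [Finset.mem_compl] at hq₀
  have htail : ∀ q ∈ sᶜ, q ≠ q₀ → (↑A⁻¹ : Matrix ι ι ℤ) k q * (A : Matrix ι ι ℤ) q k = 0 :=
    fun q hq hqq₀ => by
      by_contra h
      have := hmin q q₀ hqq₀ hq₀ hq₀k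
      have := hmin q₀ q (Ne.symm hqq₀) (Finset.mem_compl.1 hq) (right_ne_zero_of_mul h)
      omega
  rw [Finset.sum_eq_single_of_mem q₀ (Finset.mem_compl.2 hq₀) htail, mul_comm] at hsum
  have hunit := Int.eq_one_or_neg_one_of_mul_eq_one hsum
  refine ⟨q₀, hq₀, hunit, fun p hp => ?_⟩
  have := hmin p q₀ hp hq₀ hq₀k
  omega

end FixesCols

theorem transvectionGL_mem {E : Subgroup (GL ι ℤ)} {p q : ι} {h : p ≠ q}
    (ht : transvectionGL h 1 ∈ E) (c : ℤ) : transvectionGL h c ∈ E :=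
  transvectionGL_eq_zpow h c ▸ zpow_mem ht c

variable {E : Subgroup (GL ι ℤ)}

theorem mem_of_col_eq_single (ht : ∀ (p q : ι) (h : p ≠ q), transvectionGL h 1 ∈ E)
    (hsign : ∀ k : ι, signChange k ∈ E) {s : Finset ι} {k q₀ : ι} (hk : k ∉ s) (hq₀ : q₀ ∉ s)
    (hnext : ∀ B, FixesCols (insert k s) B → B ∈ E) {A : GL ι ℤ} (hA : FixesCols s A)
    (hunit : (A : Matrix ι ι ℤ) q₀ k = 1 ∨ (A : Matrix ι ι ℤ) q₀ k = -1)
    (hcol : ∀ p ≠ q₀, (A : Matrix ι ι ℤ) p k = 0) : A ∈ E := by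
  wlog hone : (A : Matrix ι ι ℤ) q₀ k = 1 generalizing A
  · have hneg := hunit.resolve_left hone
    refine (E.mul_mem_cancel_left (hsign q₀)).1 (this (hA.signChange_mul hq₀) ?_ ?_ ?_) <;>
      simp +contextual [signChange_mul_apply, hneg, hcol]
  by_cases hq₀k : q₀ = k
  · subst hq₀k
    refine hnext A (hA.insert fun i => ?_)
    rcases eq_or_ne i q₀ with rfl | hi
    · simp [hone]
    · simp [hcol i hi, one_apply_ne hi]
  · refine (E.mul_mem_cancel_left (transvectionGL_mem (ht k q₀ (Ne.symm hq₀k)) 1)).1 <|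
      (E.mul_mem_cancel_left (transvectionGL_mem (ht q₀ k hq₀k) (-1))).1 <| hnext _ <|
      ((hA.transvectionGL_mul _ hq₀ 1).transvectionGL_mul _ hk (-1)).insert fun i => ?_
    rcases eq_or_ne i q₀ with rfl | hi
    · simp [transvectionGL_mul_apply, hone, hcol k (Ne.symm hq₀k), hq₀k]
    · rcases eq_or_ne i k with rfl | hik
      · simp [transvectionGL_mul_apply, hone, hcol, hi]
      · simp [transvectionGL_mul_apply, hcol i hi, hi, hik, one_apply_ne hik]

theorem mem_of_fixesCols_of_insert (ht : ∀ (p q : ι) (h : p ≠ q), transvectionGL h 1 ∈ E)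
    (hsign : ∀ k : ι, signChange k ∈ E) {s : Finset ι} {k : ι} (hk : k ∉ s)
    (hnext : ∀ B, FixesCols (insert k s) B → B ∈ E) {A : GL ι ℤ} (hA : FixesCols s A) :
    A ∈ E := by
  obtain ⟨μ, hμ⟩ : ∃ μ, ∑ p, ((A : Matrix ι ι ℤ) p k).natAbs = μ := ⟨_, rfl⟩
  induction μ using Nat.strong_induction_on generalizing A with
  | _ μ ih =>
  -- Euclid's algorithm on column `k`, pivoting on rows outside `s` so that the columns in `s`
  -- stay fixed.
  by_cases hred : ∃ p q, ∃ h : p ≠ q, q ∉ s ∧ (A : Matrix ι ι ℤ) q k ≠ 0 ∧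
      ((A : Matrix ι ι ℤ) q k).natAbs ≤ ((A : Matrix ι ι ℤ) p k).natAbs
  · obtain ⟨p, q, hpq, hq, hq0, hle⟩ := hred
    set c := -((A : Matrix ι ι ℤ) p k / (A : Matrix ι ι ℤ) q k)
    have hp : (↑(transvectionGL hpq c * A) : Matrix ι ι ℤ) p k
        = (A : Matrix ι ι ℤ) p k % (A : Matrix ι ι ℤ) q k := by
      rw [transvectionGL_mul_apply, if_pos rfl, Int.emod_def]
      ring
    have hlt : ((↑(transvectionGL hpq c * A) : Matrix ι ι ℤ) p k).natAbs
        < ((A : Matrix ι ι ℤ) p k).natAbs := by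
      rw [hp]
      have := Int.emod_lt ((A : Matrix ι ι ℤ) p k) hq0
      have := Int.emod_nonneg ((A : Matrix ι ι ℤ) p k) hq0
      omega
    refine (E.mul_mem_cancel_left (transvectionGL_mem (ht p q hpq) c)).1 <|
      ih _ ?_ (hA.transvectionGL_mul hpq hq c) rfl
    rw [← hμ]
    refine Finset.sum_lt_sum (fun i _ => ?_) ⟨p, Finset.mem_univ p, hlt⟩
    rcases eq_or_ne i p with rfl | hi
    · exact hlt.le
    · rw [transvectionGL_mul_apply, if_neg hi]
  · push Not at hred
    obtain ⟨q₀, hq₀, hunit, hcol⟩ := hA.exists_col_eq_single hk hred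
    exact mem_of_col_eq_single ht hsign hk hq₀ hnext hA hunit hcol

theorem eq_top_of_transvectionGL_mem (ht : ∀ (p q : ι) (h : p ≠ q), transvectionGL h 1 ∈ E)
    (hsign : ∀ k : ι, signChange k ∈ E) : E = ⊤ := by
  suffices h : ∀ s : Finset ι, ∀ A, FixesCols s A → A ∈ E from
    eq_top_iff.2 fun A _ => h ∅ A fun j hj => absurd hj (Finset.notMem_empty j)
  refine fun s => Finset.strongDownwardInduction (n := Fintype.card ι)
    (p := fun s => ∀ A, FixesCols s A → A ∈ E) (fun s ih _ A hA => ?_) s (Finset.card_le_univ s)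
  by_cases hs : ∃ k, k ∉ s
  · obtain ⟨k, hk⟩ := hs
    exact mem_of_fixesCols_of_insert ht hsign hk
      (fun B => ih (Finset.card_le_univ _) (Finset.ssubset_insert hk) B) hA
  · push Not at hs
    have : A = 1 := Units.ext <| Matrix.ext fun i j => hA j (hs j) i
    exact this ▸ E.one_mem

end Generation

section Automaton

variable {ι : Type*} [Fintype ι] [DecidableEq ι]

def toAffine : GL ι ℤ →* (ι → ℤ) ≃ᵃ[ℤ] (ι → ℤ) where
  toFun A := (LinearMap.GeneralLinearGroup.generalLinearEquiv ℤ (ι → ℤ)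
    (GeneralLinearGroup.toLin A)).toAffineEquiv
  map_one' := by ext; simp
  map_mul' A B := by ext; simp

theorem exists_toAffine_eq (f : (ι → ℤ) ≃ₗ[ℤ] (ι → ℤ)) : ∃ A, toAffine A = f.toAffineEquiv :=
  ⟨GeneralLinearGroup.toLin.symm ((LinearMap.GeneralLinearGroup.generalLinearEquiv ℤ _).symm f),
    by ext; simp [toAffine]⟩

variable {G : Type*} (gen : G → GL ι ℤ) {M : ℤ}
  (hM : ∀ g d i, |((gen g : Matrix ι ι ℤ) *ᵥ digitVal d) i| ≤ M)

abbrev State (G ι : Type*) (M : ℤ) := G × (ι → Set.Icc (-M) M)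

def State.translation (q : State G ι M) : ι → ℤ := fun i => q.2 i

def step (q : State G ι M × (ι → ZMod 2)) : (ι → ZMod 2) × State G ι M :=
  let v := (gen q.1.1 : Matrix ι ι ℤ) *ᵥ digitVal q.2 + q.1.translation
  (digit v, (q.1.1, fun i => ⟨half v i, by
    have hg := abs_le.mp (hM q.1.1 q.2 i)
    have hm := (q.1.2 i).2
    simp only [Set.mem_Icc, half, v, Pi.add_apply, State.translation] at hm ⊢
    omega⟩))

def stateAffine (q : State G ι M) : (ι → ℤ) ≃ᵃ[ℤ] (ι → ℤ) :=
  AffineEquiv.constVAdd ℤ (ι → ℤ) q.translation * toAffine (gen q.1)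

theorem stateAffine_apply (q : State G ι M) (z : ι → ℤ) :
    stateAffine gen q z = (gen q.1 : Matrix ι ι ℤ) *ᵥ z + q.translation :=
  add_comm _ _

theorem mealyRun_step (q : State G ι M) (w : List (ι → ZMod 2)) :
    mealyRun (step gen hM) q w = wordPerm (stateAffine gen q) w := by
  induction w generalizing q with
  | nil => rfl
  | cons d w ih =>
    set v := (gen q.1 : Matrix ι ι ℤ) *ᵥ digitVal d + q.translation
    have hv : stateAffine gen q (ofDigits (d :: w))
        = v + (2 : ℤ) • ((gen q.1 : Matrix ι ι ℤ) *ᵥ ofDigits w) := by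
      rw [stateAffine_apply, ofDigits, mulVec_add, mulVec_smul, add_right_comm]
    rw [mealyRun, ih, wordPerm_apply, wordPerm_apply, wordMap, wordMap, hv, List.length_cons,
      toDigits, digit_add_two_smul, half_add_two_smul, stateAffine_apply, add_comm]
    rfl

end Automaton

section Closure

variable {ι : Type*} [Fintype ι] [DecidableEq ι]

abbrev Generator (ι : Type*) := {p : ι × ι // p.1 ≠ p.2} ⊕ ι

def generator : Generator ι → GL ι ℤ
  | .inl p => transvectionGL p.2 1
  | .inr k => signChange k

theorem abs_generator_mulVec_digitVal_le (g : Generator ι) (d : ι → ZMod 2) (i : ι) :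
    |((generator g : Matrix ι ι ℤ) *ᵥ digitVal d) i| ≤ 2 := by
  have hd : ∀ j, 0 ≤ digitVal d j ∧ digitVal d j ≤ 1 := fun j => by
    have := (d j).val_lt
    simp only [digitVal]
    omega
  rcases g with ⟨⟨p, q⟩, hpq⟩ | k
  · change |(transvection p q 1 *ᵥ digitVal d) i| ≤ 2
    rw [transvection, add_mulVec, one_mulVec, single_mulVec, Pi.add_apply, abs_le,
      Function.update_apply]
    simp only [Pi.zero_apply]
    split_ifs <;> constructor <;> linarith [hd i, hd q]
  · change |(diagonal (Function.update (1 : ι → ℤ) k (-1)) *ᵥ digitVal d) i| ≤ 2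
    rw [mulVec_diagonal, Function.update_apply, abs_le]
    simp only [Pi.one_apply]
    split_ifs <;> constructor <;> linarith [hd i]

variable {C : Subgroup ((ι → ℤ) ≃ᵃ[ℤ] (ι → ℤ))}

theorem constVAdd_mul_toAffine_mem
    (hC : Set.range (stateAffine (M := 2) (generator (ι := ι))) ⊆ C) (g : Generator ι)
    {m : ι → ℤ} (hm : ∀ i, m i ∈ Set.Icc (-2 : ℤ) 2) :
    AffineEquiv.constVAdd ℤ (ι → ℤ) m * toAffine (generator g) ∈ C :=
  hC ⟨(g, fun i => ⟨m i, hm i⟩), rfl⟩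

theorem toAffine_mem (hC : Set.range (stateAffine (M := 2) (generator (ι := ι))) ⊆ C)
    (A : GL ι ℤ) : toAffine A ∈ C := by
  have hgen : ∀ g, toAffine (generator g) ∈ C := fun g => by
    simpa [← AffineEquiv.one_def] using
      constVAdd_mul_toAffine_mem hC g (m := 0) fun _ => by norm_num
  have htop := eq_top_of_transvectionGL_mem (E := C.comap toAffine)
    (fun p q h => hgen (.inl ⟨(p, q), h⟩)) fun k => hgen (.inr k)
  exact Subgroup.mem_comap.1 (htop ▸ Subgroup.mem_top A)

theorem constVAdd_mem (hC : Set.range (stateAffine (M := 2) (generator (ι := ι))) ⊆ C)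
    (m : ι → ℤ) : AffineEquiv.constVAdd ℤ (ι → ℤ) m ∈ C := by
  have hsingle : ∀ i, AffineEquiv.constVAdd ℤ (ι → ℤ) (Pi.single i 1) ∈ C := fun i => by
    have hm : ∀ j, (Pi.single i 1 : ι → ℤ) j ∈ Set.Icc (-2 : ℤ) 2 := fun j => by
      rcases eq_or_ne j i with rfl | h <;> simp [*]
    simpa using mul_mem (constVAdd_mul_toAffine_mem hC (.inr i) hm)
      (inv_mem (toAffine_mem hC (generator (.inr i))))
  rw [← Finset.univ_sum_single m]
  refine Finset.sum_induction _ (fun v => AffineEquiv.constVAdd ℤ (ι → ℤ) v ∈ C)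
    (fun a b ha hb => ?_) ?_ fun i _ => ?_
  · rw [AffineEquiv.constVAdd_add]
    exact mul_mem ha hb
  · rw [AffineEquiv.constVAdd_zero, ← AffineEquiv.one_def]
    exact one_mem C
  · rw [← mul_one (m i), ← smul_eq_mul, Pi.single_smul', AffineEquiv.constVAdd_zsmul]
    exact zpow_mem (hsingle i) _

theorem closure_range_stateAffine_generator :
    Subgroup.closure (Set.range (stateAffine (M := 2) (generator (ι := ι)))) = ⊤ := by
  refine eq_top_iff.2 fun f _ => ?_
  obtain ⟨A, hA⟩ := exists_toAffine_eq f.linear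
  rw [← f.constVAdd_mul_linear, ← hA]
  exact mul_mem (constVAdd_mem Subgroup.subset_closure _) (toAffine_mem Subgroup.subset_closure A)

end Closure

end BrunnerSidki

theorem affine_group_is_automata_group_general (n : ℕ) :
    ∃ (A Q : Type) (_ : Fintype A) (_ : Fintype Q)
      (τ : Q × A → A × Q) (ρ : Q → Equiv.Perm (List A)),
      MealyInvertible τ ∧
      (∀ (q : Q) (w : List A), ρ q w = mealyRun τ q w) ∧
      Nonempty ((Subgroup.closure (Set.range ρ) : Subgroup (Equiv.Perm (List A))) ≃*
        ((Fin n → ℤ) ≃ᵃ[ℤ] (Fin n → ℤ))) := by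
  open BrunnerSidki in
  let τ := step (ι := Fin n) generator abs_generator_mulVec_digitVal_le
  let ρ := fun q => wordPerm (stateAffine (M := 2) (generator (ι := Fin n)) q)
  have hrun : ∀ q w, ρ q w = mealyRun τ q w := fun q w => (mealyRun_step _ _ q w).symm
  have hclosure : Subgroup.closure (Set.range ρ) = wordPerm.range := by
    rw [Set.range_comp', ← MonoidHom.map_closure, closure_range_stateAffine_generator,
      ← MonoidHom.range_eq_map]
  refine ⟨_, _, inferInstance, inferInstance, τ, ρ,
    mealyInvertible_of_injective τ fun q => ?_, hrun,
    ⟨(MulEquiv.subgroupCongr hclosure).trans (MonoidHom.ofInjective wordPerm_injective).symm⟩⟩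
  rw [← funext (hrun q)]
  exact (ρ q).injective

/-- Brunner–Sidki: for every `n ≥ 1`, the affine group `ℤⁿ ⋊ GLₙ(ℤ)` — realized as
the group of affine self-equivalences `z ↦ a z + m` of `ℤⁿ` (`a ∈ GLₙ(ℤ)`,
`m ∈ ℤⁿ`) — is an automata group: there is an invertible Mealy automaton, over a
finite alphabet `A` and with finite state set `Q`, such that the subgroup of
`Sym(A*)` generated by the permutations computed by its states is isomorphic to
`ℤⁿ ⋊ GLₙ(ℤ)`. -/
theorem affine_group_is_automata_group (n : ℕ) (hn : 1 ≤ n) :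
    ∃ (A Q : Type) (_ : Fintype A) (_ : Fintype Q)
      (τ : Q × A → A × Q) (ρ : Q → Equiv.Perm (List A)),
      MealyInvertible τ ∧
      (∀ (q : Q) (w : List A), ρ q w = mealyRun τ q w) ∧
      Nonempty ((Subgroup.closure (Set.range ρ) : Subgroup (Equiv.Perm (List A))) ≃*
        ((Fin n → ℤ) ≃ᵃ[ℤ] (Fin n → ℤ))) :=
  affine_group_is_automata_group_general n
end

section
/- Abért: a weakly branch group satisfies no group identity; that is, if G ≤ Aut(A*) is a weakly branch group, then for every k and every nontrivial element w = w(x₁, …, x_k) of the free group F_k, there exist a₁, …, a_k ∈ G such that w(a₁, …, a_k) ≠ 1. -/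
/-
Write a nontrivial `w` as a reduced word `l₁ ⋯ lₙ` in the letters `x_i^{±1}`. The values of the
generators are chosen one letter at a time, from the right, so that the vertices
`v, lₙ v, lₙ₋₁ lₙ v, …, w(a) v` of a deep level have pairwise distinct prefixes of a controlled
depth; in particular `w(a) v ≠ v`.

To prepend a letter `x_i^e` with current endpoint `p`, we replace `a_i^e` by `h a_i^e`, where `h`
is supported on the subtree below a prefix `u` of `q = a_i^e p` that is deeper than all prefixes
separating the trajectory so far. Then `h` fixes every vertex the old trajectory needs (reducedness
rules out the one vertex, `p` itself, reached through the inverse letter), and `h` moves `q` at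
`m` levels below `u`. Such an `h` is a conjugate, by level transitivity, of the rigid copy at `u`
of a nontrivial element of `K` that moves a vertex of length `m`. A pigeonhole argument over
disjoint windows of width `m` places `u` so that no vertex of the trajectory branches off from `q`
between `u` and `m` levels below it; hence `h q` is separated from the whole trajectory.
-/

/-- A permutation of `A*` is a tree automorphism if it preserves word length and
prefixes. -/
def IsTreeAut {A : Type*} (g : Equiv.Perm (List A)) : Prop :=
  (∀ w : List A, (g w).length = w.length) ∧
  ∀ u v : List A, (g u) <+: (g (u ++ v))

/-- The restriction (section/state) of a tree automorphism `g` at the vertex `u`, as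
a map `A* → A*`: it satisfies `g (u ++ v) = g u ++ (restrictFun g u) v`. -/
def restrictFun {A : Type*} (g : Equiv.Perm (List A)) (u : List A) : List A → List A :=
  fun v => (g (u ++ v)).drop u.length

/-- A subgroup `G ≤ Aut(A*)` is weakly branch if it consists of tree automorphisms,
acts transitively on each level `Aⁿ`, and contains, for some nontrivial subgroup
`K ≤ G`, all the permutations acting as some `k ∈ K` on the subtree `u A*` and
trivially elsewhere, for every vertex `u`. -/
def WeaklyBranch {A : Type*} (G : Subgroup (Equiv.Perm (List A))) : Prop :=
  (∀ g ∈ G, IsTreeAut g) ∧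
  (∀ u v : List A, u.length = v.length → ∃ g ∈ G, (g : Equiv.Perm (List A)) u = v) ∧
  ∃ K : Subgroup (Equiv.Perm (List A)), K ≤ G ∧ K ≠ ⊥ ∧
    ∀ u : List A, ∀ k ∈ K, ∃ g ∈ G,
      (∀ v : List A, (g : Equiv.Perm (List A)) (u ++ v) = u ++ (k : Equiv.Perm (List A)) v) ∧
      (∀ w : List A, ¬ u <+: w → (g : Equiv.Perm (List A)) w = w)

open Equiv

theorem List.take_eq_take_of_le {α : Type*} {x y : List α} {d e : ℕ} (hde : d ≤ e)
    (h : x.take e = y.take e) : x.take d = y.take d := by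
  simpa [List.take_take, Nat.min_eq_left hde] using congrArg (List.take d) h

theorem injOn_suffixes_cons {α β : Type*} {f : List α → β} {l : α} {M : List α}
    (hM : Set.InjOn f {S | S <:+ M}) (hnew : ∀ S, S <:+ M → f (l :: M) ≠ f S) :
    Set.InjOn f {S | S <:+ l :: M} := by
  intro S hS T hT hST
  simp only [Set.mem_ofPred_eq, List.suffix_cons_iff] at hS hT
  rcases hS with rfl | hS <;> rcases hT with rfl | hT
  · rfl
  · exact absurd hST (hnew T hT)
  · exact absurd hST.symm (hnew S hS)
  · exact hM hS hT hST

namespace IsTreeAut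

variable {A : Type*} {g : Perm (List A)}

theorem take_apply (hg : IsTreeAut g) (x : List A) (d : ℕ) : (g x).take d = g (x.take d) := by
  have hpre : g (x.take d) <+: g x := by
    simpa using hg.2 (x.take d) (x.drop d)
  rw [List.prefix_iff_eq_take.1 hpre, hg.1, List.length_take, List.take_eq_take_iff, hg.1]
  omega

theorem take_apply_eq_take_apply_iff (hg : IsTreeAut g) {x y : List A} {d : ℕ} :
    (g x).take d = (g y).take d ↔ x.take d = y.take d := by
  rw [hg.take_apply, hg.take_apply, g.apply_eq_iff_eq]

theorem apply_nil (hg : IsTreeAut g) : g [] = [] :=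
  List.eq_nil_of_length_eq_zero (hg.1 [])

theorem isPrefix_apply (hg : IsTreeAut g) {u w : List A} (h : u <+: w) : g u <+: g w := by
  obtain ⟨v, rfl⟩ := h
  exact hg.2 u v

theorem apply_eq_of_apply_append_eq (hg : IsTreeAut g) {u v s : List A}
    (h : g (u ++ v) = u ++ s) : g u = u := by
  simpa [h] using (hg.take_apply (u ++ v) u.length).symm

end IsTreeAut

theorem exists_window_of_antitone {β : Type*} (Y : List β) (P : β → ℕ → Prop)
    (hP : ∀ y, Antitone (P y)) (D m : ℕ) :
    ∃ t ≤ Y.length, ∀ y ∈ Y, P y (D + t * m) → P y (D + t * m + m) := by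
  classical
  set bad : β → Finset ℕ := fun y =>
    (Finset.range (Y.length + 1)).filter fun t => P y (D + t * m) ∧ ¬ P y (D + t * m + m)
  have hbad : ∀ y, (bad y).card ≤ 1 := by
    intro y
    have later : ∀ {s t}, s < t → P y (D + t * m) → P y (D + s * m + m) := fun hst =>
      hP y (by nlinarith)
    refine Finset.card_le_one.2 fun t₁ h₁ t₂ h₂ => ?_
    simp only [bad, Finset.mem_filter] at h₁ h₂
    by_contra hne
    rcases Nat.lt_or_gt_of_ne hne with hlt | hlt
    · exact h₁.2.2 (later hlt h₂.2.1)
    · exact h₂.2.2 (later hlt h₁.2.1)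
  have hcard : (Y.toFinset.biUnion bad).card < (Finset.range (Y.length + 1)).card :=
    calc (Y.toFinset.biUnion bad).card
        ≤ ∑ y ∈ Y.toFinset, (bad y).card := Finset.card_biUnion_le
      _ ≤ ∑ _y ∈ Y.toFinset, 1 := Finset.sum_le_sum fun y _ => hbad y
      _ ≤ Y.length := by simpa using List.toFinset_card_le Y
      _ < (Finset.range (Y.length + 1)).card := by simp
  obtain ⟨t, ht, ht_bad⟩ := Finset.exists_mem_notMem_of_card_lt_card hcard
  refine ⟨t, Nat.lt_succ_iff.1 (Finset.mem_range.1 ht), fun y hy hPt => ?_⟩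
  by_contra hPt'
  exact ht_bad <| Finset.mem_biUnion.2
    ⟨y, List.mem_toFinset.2 hy, Finset.mem_filter.2 ⟨ht, hPt, hPt'⟩⟩

def MovesWithinSubtrees {A : Type*} (G : Subgroup (Perm (List A))) (m : ℕ) : Prop :=
  ∀ u s : List A, s.length = m →
    ∃ h ∈ G, (∀ w, ¬ u <+: w → h w = w) ∧ h u = u ∧ h (u ++ s) ≠ u ++ s

theorem WeaklyBranch.exists_movesWithinSubtrees {A : Type*} {G : Subgroup (Perm (List A))}
    (hG : WeaklyBranch G) : ∃ v₀ : List A, v₀ ≠ [] ∧ MovesWithinSubtrees G v₀.length := by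
  obtain ⟨hta, htr, K, hKG, hK, hrig⟩ := hG
  obtain ⟨⟨σ, hσK⟩, hσ⟩ := Subgroup.ne_bot_iff_exists_ne_one.1 hK
  obtain ⟨v₀, hv₀⟩ : ∃ v, σ v ≠ v := by
    by_contra! h
    exact hσ (Subtype.ext (Equiv.ext h))
  have hσ_nil : σ [] = [] := (hta σ (hKG hσK)).apply_nil
  refine ⟨v₀, fun h => hv₀ (h ▸ hσ_nil), fun u s hs => ?_⟩
  obtain ⟨g₁, hg₁G, hg₁, hg₁_fix⟩ := hrig u σ hσK
  obtain ⟨g₂, hg₂G, hg₂⟩ := htr (u ++ v₀) (u ++ s) (by simp [hs])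
  have hg₂_tree := hta g₂ hg₂G
  have hg₂u : g₂ u = u := hg₂_tree.apply_eq_of_apply_append_eq hg₂
  have hg₂u' : g₂⁻¹ u = u := by rw [Perm.inv_eq_iff_eq, hg₂u]
  have hg₁u : g₁ u = u := by simpa [hσ_nil] using hg₁ []
  refine ⟨g₂ * g₁ * g₂⁻¹, mul_mem (mul_mem hg₂G hg₁G) (inv_mem hg₂G), fun w hw => ?_, ?_, ?_⟩
  · have hw' : ¬ u <+: g₂⁻¹ w := fun hpre =>
      hw (by simpa [hg₂u] using hg₂_tree.isPrefix_apply hpre)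
    rw [Perm.mul_apply, Perm.mul_apply, hg₁_fix _ hw']
    simp
  · rw [Perm.mul_apply, Perm.mul_apply, hg₂u', hg₁u, hg₂u]
  · have hs' : g₂⁻¹ (u ++ s) = u ++ v₀ := by rw [Perm.inv_eq_iff_eq, hg₂]
    rw [Perm.mul_apply, Perm.mul_apply, hs', hg₁, ← hg₂, Ne, g₂.apply_eq_iff_eq,
      List.append_cancel_left_eq]
    exact hv₀

section Words

variable {X ι : Type*}

def letterPerm (a : ι → Perm X) (l : ι × Bool) : Perm X :=
  cond l.2 (a l.1) (a l.1)⁻¹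

def wordPerm (a : ι → Perm X) (L : List (ι × Bool)) : Perm X :=
  (L.map (letterPerm a)).prod

theorem FreeGroup.lift_mk_eq_wordPerm (a : ι → Perm X) (L : List (ι × Bool)) :
    FreeGroup.lift a (FreeGroup.mk L) = wordPerm a L :=
  FreeGroup.lift_mk

@[simp]
theorem wordPerm_nil (a : ι → Perm X) : wordPerm a [] = 1 :=
  rfl

theorem wordPerm_cons (a : ι → Perm X) (l : ι × Bool) (L : List (ι × Bool)) :
    wordPerm a (l :: L) = letterPerm a l * wordPerm a L :=
  List.prod_cons

theorem letterPerm_not (a : ι → Perm X) (i : ι) (e : Bool) :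
    letterPerm a (i, !e) = (letterPerm a (i, e))⁻¹ := by
  cases e <;> simp [letterPerm]

theorem letterPerm_mem {G : Subgroup (Perm X)} {a : ι → Perm X} (ha : ∀ i, a i ∈ G)
    (l : ι × Bool) : letterPerm a l ∈ G := by
  cases h : l.2 <;> simp [letterPerm, h, ha]

theorem wordPerm_mem {G : Subgroup (Perm X)} {a : ι → Perm X} (ha : ∀ i, a i ∈ G)
    (L : List (ι × Bool)) : wordPerm a L ∈ G :=
  G.list_prod_mem fun _ hg => by
    obtain ⟨l, -, rfl⟩ := List.mem_map.1 hg
    exact letterPerm_mem ha l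

variable [DecidableEq ι]

def twist (a : ι → Perm X) (i : ι) (e : Bool) (h : Perm X) : ι → Perm X :=
  Function.update a i (cond e (h * a i) (a i * h⁻¹))

variable {a : ι → Perm X} {i : ι} {e : Bool} {h : Perm X}

theorem twist_mem {G : Subgroup (Perm X)} (ha : ∀ j, a j ∈ G) (hh : h ∈ G) (j : ι) :
    twist a i e h j ∈ G := by
  rcases eq_or_ne j i with rfl | hj
  · cases e <;> simp [twist, mul_mem, hh, ha]
  · simpa [twist, hj] using ha j

theorem letterPerm_twist_self : letterPerm (twist a i e h) (i, e) = h * letterPerm a (i, e) := by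
  cases e <;> simp [letterPerm, twist]

theorem letterPerm_twist_not :
    letterPerm (twist a i e h) (i, !e) = letterPerm a (i, !e) * h⁻¹ := by
  rw [letterPerm_not, letterPerm_not, letterPerm_twist_self, mul_inv_rev]

theorem letterPerm_twist_of_ne {l : ι × Bool} (hl : l.1 ≠ i) :
    letterPerm (twist a i e h) l = letterPerm a l := by
  simp [letterPerm, twist, hl]

theorem wordPerm_twist_apply_of_isSuffix {M : List (ι × Bool)}
    (hred : FreeGroup.IsReduced ((i, e) :: M)) {x : X}
    (hfix : ∀ S, S <:+ M → S ≠ M →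
      h (letterPerm a (i, e) (wordPerm a S x)) = letterPerm a (i, e) (wordPerm a S x)) :
    ∀ S, S <:+ M → wordPerm (twist a i e h) S x = wordPerm a S x
  | [], _ => rfl
  | (j, b) :: S, hS => by
    have hS' : S <:+ M := (List.suffix_cons _ S).trans hS
    have hSM : S ≠ M := by
      rintro rfl
      simpa using hS.length_le
    rw [wordPerm_cons, wordPerm_cons, Perm.mul_apply, Perm.mul_apply,
      wordPerm_twist_apply_of_isSuffix hred hfix S hS']
    rcases eq_or_ne j i with rfl | hj
    · rcases Bool.eq_or_eq_not b e with rfl | rfl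
      · rw [letterPerm_twist_self, Perm.mul_apply, hfix S hS' hSM]
      · -- reducedness: the letter `(j, !e)` cannot come right after `(j, e)`
        have hM : (j, !e) :: S ≠ M := by
          rintro rfl
          simp at hred
        have hfixed := hfix _ hS hM
        rw [wordPerm_cons, Perm.mul_apply, letterPerm_not, Perm.coe_inv,
          Equiv.apply_symm_apply] at hfixed
        rw [letterPerm_twist_not, Perm.mul_apply, Perm.inv_eq_iff_eq.2 hfixed.symm]
    · rw [letterPerm_twist_of_ne hj]

end Words

section Trajectory

variable {A : Type*} {G : Subgroup (Perm (List A))} {m : ℕ}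

theorem exists_mem_fixing_separating (hta : ∀ g ∈ G, IsTreeAut g)
    (hmove : MovesWithinSubtrees G m) (q : List A) (Y : List (List A)) (D : ℕ)
    (hq : D + (Y.length + 1) * m ≤ q.length) :
    ∃ h ∈ G, (∀ y, y.take D ≠ q.take D → h y = y) ∧
      ∀ y ∈ Y, (h q).take (D + (Y.length + 1) * m) ≠ y.take (D + (Y.length + 1) * m) := by
  obtain ⟨t, ht, hwindow⟩ := exists_window_of_antitone Y (fun y d => q.take d = y.take d)
    (fun _ _ _ hde => List.take_eq_take_of_le hde) D m
  set ℓ := D + t * m with hℓ_def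
  have hDℓ : D ≤ ℓ := Nat.le_add_right D _
  have hℓ : ℓ + m ≤ D + (Y.length + 1) * m := by
    have := Nat.mul_le_mul_right m (Nat.add_le_add_right ht 1)
    rw [Nat.add_one_mul t] at this
    omega
  have hℓq : (q.take ℓ).length = ℓ := List.length_take_of_le (by omega)
  obtain ⟨h, hG, hsupp, hu, hmoved⟩ := hmove (q.take ℓ) ((q.drop ℓ).take m)
    (List.length_take_of_le (by simp; omega))
  have hh := hta h hG
  refine ⟨h, hG, fun y hy => hsupp y fun hpre => hy ?_, fun y hy hsep => ?_⟩
  · rw [List.prefix_iff_eq_take, hℓq] at hpre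
    exact List.take_eq_take_of_le hDℓ hpre.symm
  · by_cases hqy : q.take ℓ = y.take ℓ
    · -- `y` still follows `q` at the end of the window, where `h` moves `q`
      apply hmoved
      rw [← List.take_add, ← hh.take_apply, hwindow y hy hqy]
      exact List.take_eq_take_of_le hℓ hsep
    · apply hqy
      rw [← hu, ← hh.take_apply]
      exact List.take_eq_take_of_le (by omega) hsep

/-- Passing from `t` to `t + 1` letters costs one window of width `m` for each of the `t + 1`
vertices of the trajectory, plus one. -/
def trajectoryDepth (m : ℕ) : ℕ → ℕ
  | 0 => 0
  | t + 1 => trajectoryDepth m t + (t + 2) * m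

variable {ι : Type*} [DecidableEq ι]

theorem exists_injOn_suffixes (hta : ∀ g ∈ G, IsTreeAut g) (hmove : MovesWithinSubtrees G m)
    {v : List A} : ∀ L : List (ι × Bool), FreeGroup.IsReduced L →
      trajectoryDepth m L.length ≤ v.length →
      ∃ a : ι → Perm (List A), (∀ i, a i ∈ G) ∧
        Set.InjOn (fun S => (wordPerm a S v).take (trajectoryDepth m L.length)) {S | S <:+ L}
  | [], _, _ => ⟨1, fun _ => one_mem G, fun S hS T hT _ => by
      simp_all [List.suffix_nil]⟩
  | (i, e) :: M, hred, hv => by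
    obtain ⟨a, ha, hinj⟩ := exists_injOn_suffixes hta hmove M
      (hred.infix (List.suffix_cons _ M).isInfix) (le_trans (Nat.le_add_right _ _) hv)
    set D := trajectoryDepth m M.length
    set Op := letterPerm a (i, e)
    have hOp : IsTreeAut Op := hta Op (letterPerm_mem ha _)
    set q := Op (wordPerm a M v)
    set Y := M.tails.map fun S => wordPerm a S v
    have hYlen : Y.length = M.length + 1 := by simp [Y]
    have hq : q.length = v.length :=
      (hta _ (mul_mem (letterPerm_mem ha _) (wordPerm_mem ha M))).1 v
    obtain ⟨h, hG, hfix, hsep⟩ := exists_mem_fixing_separating hta hmove q Y D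
      (by rw [hYlen, hq]; exact hv)
    rw [hYlen] at hsep
    have hagree : ∀ S, S <:+ M → wordPerm (twist a i e h) S v = wordPerm a S v :=
      wordPerm_twist_apply_of_isSuffix hred fun S hS hSM => hfix _ fun hS_eq => hSM <|
        hinj hS (List.suffix_refl M) (hOp.take_apply_eq_take_apply_iff.1 hS_eq)
    have hlast : wordPerm (twist a i e h) ((i, e) :: M) v = h q := by
      rw [wordPerm_cons, Perm.mul_apply, hagree M (List.suffix_refl M), letterPerm_twist_self,
        Perm.mul_apply]
    have hnew : ∀ S, S <:+ M →
        (wordPerm (twist a i e h) ((i, e) :: M) v).take (trajectoryDepth m (M.length + 1)) ≠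
          (wordPerm (twist a i e h) S v).take (trajectoryDepth m (M.length + 1)) := fun S hS => by
      rw [hlast, hagree S hS]
      exact hsep _ (List.mem_map.2 ⟨S, (List.mem_tails S M).2 hS, rfl⟩)
    refine ⟨twist a i e h, twist_mem ha hG, injOn_suffixes_cons (fun S hS T hT hST => ?_) hnew⟩
    simp only [hagree S hS, hagree T hT] at hST
    exact hinj hS hT (List.take_eq_take_of_le (Nat.le_add_right _ _) hST)

end Trajectory

theorem weaklyBranch_satisfies_no_identity_general {A : Type*}
    (G : Subgroup (Equiv.Perm (List A))) (hwb : WeaklyBranch G) :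
    ∀ (k : ℕ) (w : FreeGroup (Fin k)), w ≠ 1 →
      ∃ a : Fin k → Equiv.Perm (List A),
        (∀ i : Fin k, a i ∈ G) ∧ FreeGroup.lift a w ≠ 1 := by
  intro k w hw
  obtain ⟨v₀, hv₀, hmove⟩ := hwb.exists_movesWithinSubtrees
  set L := w.toWord
  set v := List.replicate (trajectoryDepth v₀.length L.length) (v₀.head hv₀)
  obtain ⟨a, ha, hinj⟩ := exists_injOn_suffixes hwb.1 hmove L FreeGroup.isReduced_toWord
    (v := v) (by simp [v])
  refine ⟨a, ha, fun h1 => hw (FreeGroup.toWord_eq_nil_iff.1 ?_)⟩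
  have hfix : wordPerm a L v = v := by
    rw [← FreeGroup.lift_mk_eq_wordPerm, FreeGroup.mk_toWord, h1, Perm.one_apply]
  exact hinj (List.suffix_refl L) List.nil_suffix (by simp [hfix])

/-- Abért: a weakly branch group satisfies no group identity. If `G ≤ Aut(A*)` is
weakly branch, then for every `k` and every nontrivial element `w` of the free group
`F_k` there are `a₁, …, a_k ∈ G` with `w(a₁, …, a_k) ≠ 1`. -/
theorem weaklyBranch_satisfies_no_identity {A : Type*} [Fintype A]
    (G : Subgroup (Equiv.Perm (List A))) (hwb : WeaklyBranch G) :
    ∀ (k : ℕ) (w : FreeGroup (Fin k)), w ≠ 1 →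
      ∃ a : Fin k → Equiv.Perm (List A),
        (∀ i : Fin k, a i ∈ G) ∧ FreeGroup.lift a w ≠ 1 :=
  weaklyBranch_satisfies_no_identity_general G hwb
end
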